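/- arXiv:2408.02633 — 7 statements merged into one kernel-verified Lean document; each statement's English description precedes it below -/
import Mathlib

section
/- In the q-shuffle algebra V on letters x, y, for every natural number n, the q-commutator satisfies [(xxyy)^n, x]_{q^2} = q^2 (xxyy)^n ⋆ x − q^{-2} x ⋆ (xxyy)^n = (q^2 − q^{-2}) · (xxyy)^n x, where (xxyy)^n x denotes the concatenation word and (xxyy)^n ⋆ x is the q-shuffle product. -/
noncomputable section

/-- The letter `x`. -/
def bX : Bool := false
/-- The letter `y`. -/
def bY : Bool := true

/-- The bilinear pairing on letters: `⟨x,x⟩ = ⟨y,y⟩ = 2`, `⟨x,y⟩ = ⟨y,x⟩ = -2`. -/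
def qbr (a b : Bool) : ℤ := if a = b then 2 else -2

/-- The sum `⟨a, w₁⟩ + ⋯ + ⟨a, wₙ⟩` for a letter `a` and a word `w`. -/
def qE (a : Bool) (w : List Bool) : ℤ := (w.map (qbr a)).sum

/-- Linear map on the free algebra (words-indexed finsupps) given by prepending a letter. -/
def qcons (F : Type*) [Field F] (a : Bool) :
    (List Bool →₀ F) →ₗ[F] (List Bool →₀ F) :=
  Finsupp.lmapDomain F F (List.cons a)

/-- The q-shuffle product of two words, as an element of the free algebra `List Bool →₀ F`.
Defined by the recursion `u ⋆ v = u₁((u₂⋯u_r) ⋆ v) + q^{⟨v₁,u₁⟩+⋯+⟨v₁,u_r⟩} v₁(u ⋆ (v₂⋯v_s))`. -/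
def qsh {F : Type*} [Field F] (q : F) : List Bool → List Bool → (List Bool →₀ F)
  | [], v => Finsupp.single v 1
  | a :: u, [] => Finsupp.single (a :: u) 1
  | a :: u, b :: v =>
      qcons F a (qsh q u (b :: v)) +
        (q ^ (qbr b a + qE b u)) • qcons F b (qsh q (a :: u) v)
  termination_by u v => u.length + v.length
  decreasing_by all_goals (simp only [List.length_cons]; omega)

/-- Concatenation power of a word. -/
def wpow (w : List Bool) : ℕ → List Bool
  | 0 => []
  | n + 1 => w ++ wpow w n

def wXXYY : List Bool := [bX, bX, bY, bY]
def wYYXX : List Bool := [bY, bY, bX, bX]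
def wXY : List Bool := [bX, bY]
def wYX : List Bool := [bY, bX]

lemma qcons_single {F : Type*} [Field F] (a : Bool) (w : List Bool) (c : F) :
    qcons F a (Finsupp.single w c) = Finsupp.single (a::w) c := by
  simp [qcons]

lemma shA {F : Type*} [Field F] (q : F) (b : Bool) (w : List Bool) :
    qsh q (b :: w) [bX] = qcons F b (qsh q w [bX])
      + q ^ (qbr bX b + qE bX w) • Finsupp.single (bX::b::w) (1:F) := by
  rw [qsh, qsh, qcons_single]

lemma shB {F : Type*} [Field F] (q : F) (b : Bool) (w : List Bool) :
    qsh q [bX] (b :: w) = Finsupp.single (bX::b::w) (1:F)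
      + q ^ (qbr b bX) • qcons F b (qsh q [bX] w) := by
  rw [qsh, qsh, qcons_single]; simp [qE]

lemma stepA {F : Type*} [Field F] (q : F) (hq : q ≠ 0) (w : List Bool) (hE : qE bX w = 0) :
    qsh q (bX::bX::bY::bY::w) [bX]
      = (1 + q^(-2:ℤ) + q^(-4:ℤ)) • Finsupp.single (bX::bX::bX::bY::bY::w) (1:F)
      + q^(-2:ℤ) • Finsupp.single (bX::bX::bY::bX::bY::w) 1
      + qcons F bX (qcons F bX (qcons F bY (qcons F bY (qsh q w [bX])))) := by
  rw [shA, shA, shA, shA]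
  simp only [qE] at hE
  simp only [qE, List.map_cons, List.sum_cons,
    show qbr bX bX = 2 from rfl, show qbr bX bY = (-2:ℤ) from rfl, hE]
  simp only [map_add, map_smul, qcons_single]
  norm_num only
  match_scalars <;>
    (simp only [zpow_neg, zpow_zero, zpow_one, show (2:ℤ)=((2:ℕ):ℤ) from rfl,
      show (4:ℤ)=((4:ℕ):ℤ) from rfl, zpow_natCast]
     try field_simp
     try ring)

lemma stepB {F : Type*} [Field F] (q : F) (hq : q ≠ 0) (w : List Bool) :
    qsh q [bX] (bX::bX::bY::bY::w)
      = (1 + q^(2:ℤ) + q^(4:ℤ)) • Finsupp.single (bX::bX::bX::bY::bY::w) (1:F)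
      + q^(2:ℤ) • Finsupp.single (bX::bX::bY::bX::bY::w) 1
      + qcons F bX (qcons F bX (qcons F bY (qcons F bY (qsh q [bX] w)))) := by
  rw [shB, shB, shB, shB]
  simp only [show qbr bX bX = 2 from rfl, show qbr bY bX = (-2:ℤ) from rfl]
  simp only [map_add, map_smul, qcons_single]
  match_scalars <;>
    (simp only [zpow_neg, zpow_zero, zpow_one, show (2:ℤ)=((2:ℕ):ℤ) from rfl,
      show (4:ℤ)=((4:ℕ):ℤ) from rfl, zpow_natCast]
     try field_simp
     try ring)

lemma qE_wpow {F : Type*} (n : ℕ) : qE bX (wpow wXXYY n) = 0 := by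
  induction n with
  | zero => rfl
  | succ n ih => simp [wpow, wXXYY, qE, qbr, bX, bY] at ih ⊢; omega

/-- `[(xxyy)^n, x]_{q²} = (q² − q^{-2}) (xxyy)^n x` in the q-shuffle algebra. -/
theorem stmt0 {F : Type*} [Field F] [CharZero F] (q : F) (hq : q ≠ 0)
    (hq1 : ∀ m : ℕ, 0 < m → q ^ m ≠ 1) (n : ℕ) :
    q ^ (2 : ℤ) • qsh q (wpow wXXYY n) [bX] - q ^ (-2 : ℤ) • qsh q [bX] (wpow wXXYY n)
      = (q ^ (2 : ℤ) - q ^ (-2 : ℤ)) • Finsupp.single (wpow wXXYY n ++ [bX]) (1 : F) := by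
  induction n with
  | zero =>
      show q ^ (2:ℤ) • qsh q [] [bX] - q ^ (-2:ℤ) • qsh q [bX] [] = _
      rw [qsh, qsh]
      simp [wpow, sub_smul]
  | succ n ih =>
      have hw : wpow wXXYY (n+1) = bX::bX::bY::bY::wpow wXXYY n := by
        simp [wpow, wXXYY]
      rw [hw, stepA q hq _ (qE_wpow (F := F) n), stepB q hq]
      have key : q ^ (2:ℤ) • qcons F bX (qcons F bX (qcons F bY (qcons F bY
            (qsh q (wpow wXXYY n) [bX]))))
          - q ^ (-2:ℤ) • qcons F bX (qcons F bX (qcons F bY (qcons F bY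
            (qsh q [bX] (wpow wXXYY n)))))
          = (q ^ (2:ℤ) - q ^ (-2:ℤ)) •
              Finsupp.single (bX::bX::bY::bY::(wpow wXXYY n ++ [bX])) (1:F) := by
        rw [← map_smul, ← map_smul, ← map_smul, ← map_smul,
          ← map_smul, ← map_smul, ← map_smul, ← map_smul,
          ← map_sub, ← map_sub, ← map_sub, ← map_sub, ih,
          map_smul, map_smul, map_smul, map_smul, qcons_single, qcons_single,
          qcons_single, qcons_single]
      have hlist : wpow wXXYY (n+1) ++ [bX] = bX::bX::bY::bY::(wpow wXXYY n ++ [bX]) := by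
        simp [wpow, wXXYY]
      rw [show (bX::bX::bY::bY::wpow wXXYY n) ++ [bX]
            = bX::bX::bY::bY::(wpow wXXYY n ++ [bX]) from rfl, ← key]
      match_scalars <;>
    (simp only [zpow_neg, zpow_zero, zpow_one, show (2:ℤ)=((2:ℕ):ℤ) from rfl,
      show (4:ℤ)=((4:ℕ):ℤ) from rfl, zpow_natCast]
     try field_simp
     try ring)

end
end

section
/- In the q-shuffle algebra V on letters x, y, for every natural number n, x ⋆ (yxx(yyxx)^n y) = (yxx(yyxx)^n y) ⋆ x, i.e. x commutes with the doubly alternating word yxx(yyxx)^n y under the q-shuffle product. -/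
noncomputable section

lemma qshL {F : Type*} [Field F] (q : F) (a b : Bool) (v : List Bool) :
    qsh q [a] (b::v)
      = qcons F a (Finsupp.single (b::v) 1) + (q ^ (qbr b a)) • qcons F b (qsh q [a] v) := by
  rw [qsh]; simp [qE, qsh]

lemma qshR {F : Type*} [Field F] (q : F) (a b : Bool) (v : List Bool) :
    qsh q (b::v) [a]
      = qcons F b (qsh q v [a])
        + (q ^ (qbr a b + qE a v)) • qcons F a (Finsupp.single (b::v) 1) := by
  rw [qsh]; simp [qsh]

lemma qE_cons (a b : Bool) (v : List Bool) : qE a (b::v) = qbr a b + qE a v := by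
  simp [qE]

/-- Key inductive step: if `x` commutes with `v` (with `qE x v = 0`), then it commutes
with `yxxy ++ v`. -/
lemma qsh_key {F : Type*} [Field F] (q : F) (hq : q ≠ 0) (v : List Bool)
    (hE : qE bX v = 0) (h : qsh q [bX] v = qsh q v [bX]) :
    qsh q [bX] ([bY, bX, bX, bY] ++ v) = qsh q ([bY, bX, bX, bY] ++ v) [bX] := by
  simp only [List.cons_append, List.nil_append, qshL, qshR, qE_cons, hE]
  simp only [qbr, bX, bY] at h ⊢
  simp only [Bool.false_eq_true, Bool.true_eq_false, if_false, if_true, reduceIte,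
    Int.reduceNeg, Int.reduceAdd, add_zero, map_add, map_smul, qcons_single, h]
  match_scalars <;>
    (simp only [mul_one, one_mul, mul_add, ← mul_assoc, ← zpow_add₀ hq, Int.reduceAdd,
      Int.reduceNeg, zpow_zero]; try ring)

lemma qE_append (a : Bool) (u v : List Bool) : qE a (u ++ v) = qE a u + qE a v := by
  simp [qE]

lemma qE_wn (n : ℕ) : qE bX ([bY, bX, bX] ++ wpow wYYXX n ++ [bY]) = 0 := by
  induction n with
  | zero => simp [qE, qbr, bX, bY, wpow]
  | succ n ih =>
      simp only [wpow, qE_append] at ih ⊢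
      have : qE bX wYYXX = 0 := by simp [qE, qbr, bX, bY, wYYXX]
      omega

lemma wn_succ (n : ℕ) :
    [bY, bX, bX] ++ wpow wYYXX (n + 1) ++ [bY]
      = [bY, bX, bX, bY] ++ ([bY, bX, bX] ++ wpow wYYXX n ++ [bY]) := by
  simp [wpow, wYYXX]

/-- `x` commutes with `yxx(yyxx)^n y` under the q-shuffle product. -/
theorem stmt7 {F : Type*} [Field F] [CharZero F] (q : F) (hq : q ≠ 0)
    (hq1 : ∀ m : ℕ, 0 < m → q ^ m ≠ 1) (n : ℕ) :
    qsh q [bX] ([bY, bX, bX] ++ wpow wYYXX n ++ [bY])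
      = qsh q ([bY, bX, bX] ++ wpow wYYXX n ++ [bY]) [bX] := by
  induction n with
  | zero =>
      have h0 : qsh q [bX] ([] : List Bool) = qsh q ([] : List Bool) [bX] := by
        rw [qsh, qsh]
      have := qsh_key q hq [] rfl h0
      simpa [wpow] using this
  | succ n ih =>
      rw [wn_succ]
      exact qsh_key q hq _ (qE_wn n) ih
end
end

section
/- In the q-shuffle algebra V on letters x, y, define the alternating words G̃ₖ = (xy)^k (concatenation power, G̃₀ = 1). Then for every natural number n, Σ_{k=0}^{2n} (−1)^k G̃ₖ ⋆ G̃_{2n−k} = (−1)^n [2]_q^{2n} (xxyy)^n, where [2]_q = q + q^{-1} and (xxyy)^n is a concatenation word. -/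
noncomputable section

namespace Stmt8Aux

variable {F : Type*} [Field F] (q : F)

lemma qsh_nil (v : List Bool) : qsh q [] v = Finsupp.single v 1 := by rw [qsh]
lemma qsh_nilr (a : Bool) (u : List Bool) : qsh q (a :: u) [] = Finsupp.single (a :: u) 1 := by
  rw [qsh]
lemma qsh_cons (a b : Bool) (u v : List Bool) :
    qsh q (a :: u) (b :: v) = qcons F a (qsh q u (b :: v)) +
        (q ^ (qbr b a + qE b u)) • qcons F b (qsh q (a :: u) v) := by rw [qsh]

lemma qcons_single (a : Bool) (w : List Bool) (c : F) :
    qcons F a (Finsupp.single w c) = Finsupp.single (a :: w) c := by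
  simp [qcons, Finsupp.mapDomain_single]

def u (k : ℕ) : List Bool := wpow wXY k

lemma qE_cons (a b : Bool) (w : List Bool) : qE a (b :: w) = qbr a b + qE a w := by simp [qE]

lemma qE_u (a : Bool) (k : ℕ) : qE a (u k) = 0 := by
  induction k with
  | zero => rfl
  | succ k ih =>
      show qE a (bX :: bY :: u k) = 0
      rw [qE_cons, qE_cons, ih]
      cases a <;> simp [qbr, bX, bY]

lemma u_zero : u 0 = [] := rfl
lemma u_succ (k : ℕ) : u (k+1) = bX :: bY :: u k := rfl

def A (k m : ℕ) : List Bool →₀ F := qsh q (u k) (u m)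
def P (k m : ℕ) : List Bool →₀ F := qsh q (bY :: u k) (bX :: bY :: u m)
def Q (k m : ℕ) : List Bool →₀ F := qsh q (bX :: bY :: u k) (bY :: u m)
def R (k m : ℕ) : List Bool →₀ F := qsh q (bY :: u k) (bY :: u m)

lemma A0 (m : ℕ) : A q 0 m = Finsupp.single (u m) 1 := qsh_nil q _

lemma Ak0 (k : ℕ) : A q k 0 = Finsupp.single (u k) 1 := by
  cases k with
  | zero => exact qsh_nil q _
  | succ k => exact qsh_nilr q _ _

lemma rA (k m : ℕ) : A q (k+1) (m+1) = qcons F bX (P q k m) + qcons F bX (Q q k m) := by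
  show qsh q (bX :: bY :: u k) (bX :: bY :: u m) = _
  rw [qsh_cons]
  have h : qbr bX bX + qE bX (bY :: u k) = 0 := by simp [qbr, qE_cons, qE_u, bX, bY]
  rw [h, zpow_zero, one_smul]
  rfl

lemma rP (k m : ℕ) : P q k m = qcons F bY (A q k (m+1)) + (q ^ (-2:ℤ)) • qcons F bX (R q k m) := by
  show qsh q (bY :: u k) (bX :: bY :: u m) = _
  rw [qsh_cons]
  have h : qbr bX bY + qE bX (u k) = -2 := by simp [qbr, qE_u, bX, bY]
  rw [h]
  rfl

lemma rQ (k m : ℕ) : Q q k m = qcons F bX (R q k m) + qcons F bY (A q (k+1) m) := by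
  show qsh q (bX :: bY :: u k) (bY :: u m) = _
  rw [qsh_cons]
  have h : qbr bY bX + qE bY (bY :: u k) = 0 := by simp [qbr, qE_cons, qE_u, bX, bY]
  rw [h, zpow_zero, one_smul]
  rfl

lemma rR (k m : ℕ) : R q (k+1) (m+1) =
    qcons F bY (Q q k (m+1)) + (q ^ (2:ℤ)) • qcons F bY (P q (k+1) m) := by
  show qsh q (bY :: u (k+1)) (bY :: u (m+1)) = _
  rw [qsh_cons]
  have h : qbr bY bY + qE bY (u (k+1)) = 2 := by simp [qbr, qE_u, bY]
  rw [h]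
  rfl

lemma rR0 (m : ℕ) : R q 0 (m+1) =
    qcons F bY (Finsupp.single (bY :: u (m+1)) 1) + (q ^ (2:ℤ)) • qcons F bY (P q 0 m) := by
  show qsh q (bY :: u 0) (bY :: u (m+1)) = _
  rw [qsh_cons]
  have h : qbr bY bY + qE bY (u 0) = 2 := by simp [qbr, qE_u, bY]
  rw [h, show u 0 = [] from rfl, qsh_nil]
  rfl

lemma rRk0 (k : ℕ) : R q (k+1) 0 =
    qcons F bY (Q q k 0) + (q ^ (2:ℤ)) • qcons F bY (Finsupp.single (bY :: u (k+1)) 1) := by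
  show qsh q (bY :: u (k+1)) (bY :: u 0) = _
  rw [qsh_cons]
  have h : qbr bY bY + qE bY (u (k+1)) = 2 := by simp [qbr, qE_u, bY]
  rw [h, show qsh q (bY :: u (k+1)) (u 0) = qsh q (bY :: u (k+1)) [] from rfl, qsh_nilr]
  rfl

lemma R00 : R q 0 0 = (1 + q ^ (2:ℤ)) • Finsupp.single [bY, bY] (1:F) := by
  show qsh q (bY :: u 0) (bY :: u 0) = _
  rw [qsh_cons]
  have h : qbr bY bY + qE bY (u 0) = 2 := by simp [qbr, qE_u, bY]
  rw [h, show u 0 = [] from rfl, qsh_nil, show qsh q [bY] [] = Finsupp.single [bY] (1:F) from qsh_nilr q _ _, qcons_single]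
  rw [add_smul, one_smul]

end Stmt8Aux

namespace Stmt8Aux
variable {F : Type*} [Field F] (q : F)

def SA (N : ℕ) : List Bool →₀ F := ∑ k ∈ Finset.range (N+1), ((-1:F)^k) • A q k (N-k)
def SP (N : ℕ) : List Bool →₀ F := ∑ k ∈ Finset.range (N+1), ((-1:F)^k) • P q k (N-k)
def SQ (N : ℕ) : List Bool →₀ F := ∑ k ∈ Finset.range (N+1), ((-1:F)^k) • Q q k (N-k)
def SR (N : ℕ) : List Bool →₀ F := ∑ k ∈ Finset.range (N+1), ((-1:F)^k) • R q k (N-k)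

lemma L_SP (N : ℕ) : SP q N = qcons F bY (SA q (N+1))
    + ((-1:F)^N) • Finsupp.single (bY :: u (N+1)) (1:F)
    + (q ^ (-2:ℤ)) • qcons F bX (SR q N) := by
  have step : ∀ k ∈ Finset.range (N+1), ((-1:F)^k) • P q k (N-k)
      = qcons F bY (((-1:F)^k) • A q k (N+1-k))
        + (q ^ (-2:ℤ)) • qcons F bX (((-1:F)^k) • R q k (N-k)) := by
    intro k hk
    have hk' : k ≤ N := Nat.lt_succ_iff.mp (Finset.mem_range.mp hk)
    have hidx : N + 1 - k = (N - k) + 1 := by omega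
    rw [hidx, rP]
    simp only [smul_add, map_smul, smul_comm ((-1:F)^k) (q ^ (-2:ℤ))]
  rw [SP, Finset.sum_congr rfl step, Finset.sum_add_distrib, ← map_sum, ← Finset.smul_sum,
    ← map_sum]
  have hA : (∑ k ∈ Finset.range (N+1), ((-1:F)^k) • A q k (N+1-k))
      = SA q (N+1) + ((-1:F)^N) • Finsupp.single (u (N+1)) (1:F) := by
    have h1 : SA q (N+1) = (∑ k ∈ Finset.range (N+1), ((-1:F)^k) • A q k (N+1-k))
        + ((-1:F)^(N+1)) • A q (N+1) 0 := by
      rw [SA, Finset.sum_range_succ, Nat.sub_self]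
    rw [h1, Ak0, pow_succ]
    module
  rw [hA, map_add, map_smul, qcons_single,
    show (∑ k ∈ Finset.range (N+1), ((-1:F)^k) • R q k (N-k)) = SR q N from rfl]

lemma L_SQ (N : ℕ) : SQ q N = qcons F bX (SR q N) - qcons F bY (SA q (N+1))
    + Finsupp.single (bY :: u (N+1)) (1:F) := by
  have step : ∀ k ∈ Finset.range (N+1), ((-1:F)^k) • Q q k (N-k)
      = qcons F bX (((-1:F)^k) • R q k (N-k)) + qcons F bY (((-1:F)^k) • A q (k+1) (N-k)) := by
    intro k _
    rw [rQ]
    simp only [smul_add, map_smul]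
  rw [SQ, Finset.sum_congr rfl step, Finset.sum_add_distrib, ← map_sum, ← map_sum]
  have hA : (∑ k ∈ Finset.range (N+1), ((-1:F)^k) • A q (k+1) (N-k))
      = Finsupp.single (u (N+1)) (1:F) - SA q (N+1) := by
    have h1 : SA q (N+1) = (∑ k ∈ Finset.range (N+1), ((-1:F)^(k+1)) • A q (k+1) (N-k))
        + Finsupp.single (u (N+1)) (1:F) := by
      rw [SA, Finset.sum_range_succ']
      simp only [Nat.succ_sub_succ, pow_zero, one_smul, Nat.sub_zero]
      rw [A0]
    have h2 : (∑ k ∈ Finset.range (N+1), ((-1:F)^k) • A q (k+1) (N-k))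
        = - ∑ k ∈ Finset.range (N+1), ((-1:F)^(k+1)) • A q (k+1) (N-k) := by
      rw [← Finset.sum_neg_distrib]
      refine Finset.sum_congr rfl fun k _ => ?_
      rw [pow_succ]
      module
    rw [h2, show (∑ k ∈ Finset.range (N+1), ((-1:F)^(k+1)) • A q (k+1) (N-k))
        = SA q (N+1) - Finsupp.single (u (N+1)) (1:F) from eq_sub_of_add_eq h1.symm]
    abel
  rw [hA, map_sub, qcons_single,
    show (∑ k ∈ Finset.range (N+1), ((-1:F)^k) • R q k (N-k)) = SR q N from rfl]
  abel

lemma Lcomb (hq : q ≠ 0) (N : ℕ) :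
    (q^(2:ℤ)) • SP q N - SQ q N
      = (1 + q^(2:ℤ)) • qcons F bY (SA q (N+1))
        + (((-1:F)^N * q^(2:ℤ)) - 1) • Finsupp.single (bY :: u (N+1)) (1:F) := by
  rw [L_SP, L_SQ]
  have hqq : q^(2:ℤ) * q^(-2:ℤ) = (1:F) := by rw [← zpow_add₀ hq]; norm_num
  simp only [smul_add, smul_sub, smul_smul, hqq, one_smul]
  module

end Stmt8Aux

namespace Stmt8Aux
variable {F : Type*} [Field F] (q : F)

lemma L_SR (hq : q ≠ 0) (N : ℕ) :
    SR q N = (1 + q^(2:ℤ)) • qcons F bY (qcons F bY (SA q N)) := by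
  cases N with
  | zero =>
      have h0 : SR q 0 = R q 0 0 := by
        rw [SR, Finset.sum_range_one, pow_zero, one_smul]
      have h1 : SA q 0 = Finsupp.single ([] : List Bool) (1:F) := by
        rw [SA, Finset.sum_range_one, pow_zero, one_smul, A0]
        rfl
      rw [h0, h1, R00, qcons_single, qcons_single]
  | succ N =>
      have expand : SR q (N+1)
          = (∑ j ∈ Finset.range N, ((-1:F)^(j+1)) • R q (j+1) (N-j))
            + ((-1:F)^(N+1)) • R q (N+1) 0 + R q 0 (N+1) := by
        rw [SR, Finset.sum_range_succ']
        simp only [Nat.succ_sub_succ, pow_zero, one_smul, Nat.sub_zero]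
        rw [Finset.sum_range_succ, Nat.sub_self]
      have step : ∀ j ∈ Finset.range N, ((-1:F)^(j+1)) • R q (j+1) (N-j)
          = qcons F bY (((-1:F)^(j+1)) • Q q j (N-j))
            + (q^(2:ℤ)) • qcons F bY (((-1:F)^(j+1)) • P q (j+1) (N-1-j)) := by
        intro j hj
        have hj' : j < N := Finset.mem_range.mp hj
        have hidx : N - j = (N-1-j) + 1 := by omega
        rw [hidx, rR]
        simp only [smul_add, map_smul, smul_comm ((-1:F)^(j+1)) (q ^ (2:ℤ))]
      have hQ : (∑ j ∈ Finset.range N, ((-1:F)^(j+1)) • Q q j (N-j))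
          = ((-1:F)^N) • Q q N 0 - SQ q N := by
        have h1 : SQ q N = (∑ j ∈ Finset.range N, ((-1:F)^j) • Q q j (N-j))
            + ((-1:F)^N) • Q q N 0 := by
          rw [SQ, Finset.sum_range_succ, Nat.sub_self]
        have h2 : (∑ j ∈ Finset.range N, ((-1:F)^(j+1)) • Q q j (N-j))
            = - ∑ j ∈ Finset.range N, ((-1:F)^j) • Q q j (N-j) := by
          rw [← Finset.sum_neg_distrib]
          refine Finset.sum_congr rfl fun j _ => ?_
          rw [pow_succ]
          module
        rw [h2, show (∑ j ∈ Finset.range N, ((-1:F)^j) • Q q j (N-j))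
            = SQ q N - ((-1:F)^N) • Q q N 0 from eq_sub_of_add_eq h1.symm]
        abel
      have hP : (∑ j ∈ Finset.range N, ((-1:F)^(j+1)) • P q (j+1) (N-1-j))
          = SP q N - P q 0 N := by
        have h1 : SP q N = (∑ j ∈ Finset.range N, ((-1:F)^(j+1)) • P q (j+1) (N-(j+1)))
            + P q 0 N := by
          rw [SP, Finset.sum_range_succ']
          simp only [pow_zero, one_smul, Nat.sub_zero]
        rw [show (∑ j ∈ Finset.range N, ((-1:F)^(j+1)) • P q (j+1) (N-1-j))
            = ∑ j ∈ Finset.range N, ((-1:F)^(j+1)) • P q (j+1) (N-(j+1)) from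
          Finset.sum_congr rfl fun j hj => by
            have : N - 1 - j = N - (j+1) := by omega
            rw [this]]
        exact eq_sub_of_add_eq h1.symm
      have hcomb : (q^(2:ℤ)) • qcons F bY (SP q N) - qcons F bY (SQ q N)
          = (1 + q^(2:ℤ)) • qcons F bY (qcons F bY (SA q (N+1)))
            + (((-1:F)^N * q^(2:ℤ)) - 1) • Finsupp.single (bY :: bY :: u (N+1)) (1:F) := by
        have h := congrArg (qcons F bY) (Lcomb q hq N)
        simpa only [map_add, map_sub, map_smul, qcons_single] using h
      rw [expand, Finset.sum_congr rfl step, Finset.sum_add_distrib, ← map_sum,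
        ← Finset.smul_sum, ← map_sum, hQ, hP, rRk0, rR0]
      simp only [map_sub, map_add, map_smul, qcons_single, smul_add, smul_sub]
      linear_combination (norm := module) hcomb

lemma L_SA (N : ℕ) : SA q (N+2)
    = -((1 + q^(-2:ℤ)) • qcons F bX (qcons F bX (SR q N))) := by
  have expand : SA q (N+2)
      = (∑ j ∈ Finset.range (N+1), ((-1:F)^(j+1)) • A q (j+1) (N+1-j))
        + ((-1:F)^(N+2)) • A q (N+2) 0 + A q 0 (N+2) := by
    rw [SA, Finset.sum_range_succ']
    simp only [Nat.succ_sub_succ, pow_zero, one_smul, Nat.sub_zero]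
    rw [Finset.sum_range_succ, Nat.sub_self]
  have step : ∀ j ∈ Finset.range (N+1), ((-1:F)^(j+1)) • A q (j+1) (N+1-j)
      = qcons F bX (((-1:F)^(j+1)) • P q j (N-j))
        + qcons F bX (((-1:F)^(j+1)) • Q q j (N-j)) := by
    intro j hj
    have hj' : j ≤ N := Nat.lt_succ_iff.mp (Finset.mem_range.mp hj)
    have hidx : N + 1 - j = (N - j) + 1 := by omega
    rw [hidx, rA]
    simp only [smul_add, map_smul]
  have hP2 : (∑ j ∈ Finset.range (N+1), ((-1:F)^(j+1)) • P q j (N-j)) = - SP q N := by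
    rw [SP, ← Finset.sum_neg_distrib]
    refine Finset.sum_congr rfl fun j _ => ?_
    rw [pow_succ]
    module
  have hQ2 : (∑ j ∈ Finset.range (N+1), ((-1:F)^(j+1)) • Q q j (N-j)) = - SQ q N := by
    rw [SQ, ← Finset.sum_neg_distrib]
    refine Finset.sum_congr rfl fun j _ => ?_
    rw [pow_succ]
    module
  rw [expand, Finset.sum_congr rfl step, Finset.sum_add_distrib, ← map_sum, ← map_sum,
    hP2, hQ2, Ak0, A0, L_SP, L_SQ,
    show (u (N+2)) = bX :: bY :: u (N+1) from rfl]
  simp only [map_add, map_sub, map_neg, map_smul, qcons_single]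
  module

end Stmt8Aux

namespace Stmt8Aux
variable {F : Type*} [Field F] (q : F)

lemma L_step (hq : q ≠ 0) (N : ℕ) : SA q (N+2)
    = (-((1 + q^(-2:ℤ)) * (1 + q^(2:ℤ))))
        • qcons F bX (qcons F bX (qcons F bY (qcons F bY (SA q N)))) := by
  rw [L_SA, L_SR q hq N]
  simp only [map_smul, smul_smul]
  module

lemma key (hq : q ≠ 0) (n : ℕ) : SA q (2*n)
    = ((-1:F)^n * (q + q⁻¹)^(2*n)) • Finsupp.single (wpow wXXYY n) (1:F) := by
  induction n with
  | zero =>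
      rw [show 2*0 = 0 from rfl, SA, Finset.sum_range_one, pow_zero, one_smul, A0]
      norm_num
      rfl
  | succ n ih =>
      have h2 : 2*(n+1) = (2*n) + 2 := by ring
      rw [h2, L_step q hq (2*n), ih]
      simp only [map_smul, qcons_single, smul_smul]
      rw [show wpow wXXYY (n+1) = bX::bX::bY::bY::(wpow wXXYY n) from rfl]
      congr 1
      have hsq : (1 + q^(-2:ℤ)) * (1 + q^(2:ℤ)) = (q + q⁻¹)^2 := by
        have ha : q^(2:ℤ) = q^2 := by
          norm_cast
        have hb : q^(-2:ℤ) = (q^2)⁻¹ := by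
          rw [show (-2:ℤ) = -(2:ℤ) from rfl, zpow_neg, ha]
        rw [ha, hb]
        field_simp
        ring
      rw [hsq]
      ring

end Stmt8Aux

/-- `Σ_{k=0}^{2n} (−1)^k G̃ₖ ⋆ G̃_{2n−k} = (−1)^n [2]_q^{2n} (xxyy)^n` where `G̃ₖ = (xy)^k`. -/
theorem stmt8 {F : Type*} [Field F] [CharZero F] (q : F) (hq : q ≠ 0)
    (hq1 : ∀ m : ℕ, 0 < m → q ^ m ≠ 1) (n : ℕ) :
    ∑ k ∈ Finset.range (2 * n + 1),
        ((-1 : F) ^ k) • qsh q (wpow wXY k) (wpow wXY (2 * n - k))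
      = ((-1 : F) ^ n * (q + q⁻¹) ^ (2 * n)) • Finsupp.single (wpow wXXYY n) (1 : F) := by
  exact Stmt8Aux.key q hq n
end
end

section
/- In the q-shuffle algebra V on letters x, y, define the alternating words W_{−k} = (xy)^k x for k ∈ ℕ (concatenation, so W₀ = x). Then for every natural number n, Σ_{k=0}^{2n} (−1)^k W_{−k} ⋆ W_{k−2n} = (−1)^n q [2]_q^{2n+1} (xxyy)^n xx, where [2]_q = q + q^{-1}. -/
noncomputable section

namespace QShuffleAux

/-- `W_{-k} = (xy)^k x`. -/
def Wd (k : ℕ) : List Bool := wpow wXY k ++ [bX]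
/-- `(yx)^k`. -/
def Yw (k : ℕ) : List Bool := wpow wYX k
/-- `(yyxx)^n`. -/
def Gw (n : ℕ) : List Bool := wpow wYYXX n

lemma wd_cons (k : ℕ) : Wd k = bX :: Yw k := by
  induction k with
  | zero => rfl
  | succ k ih =>
    show (wXY ++ wpow wXY k) ++ [bX] = bX :: (wYX ++ wpow wYX k)
    rw [List.append_assoc]
    have := ih
    simp only [Wd, Yw] at this
    rw [this]
    rfl

lemma yw_cons (k : ℕ) : Yw (k + 1) = bY :: Wd k := by
  show wYX ++ wpow wYX k = bY :: Wd k
  rw [wd_cons]; rfl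

lemma yw_zero : Yw 0 = [] := rfl

lemma gw_cons (n : ℕ) : Gw (n + 1) = bY :: bY :: bX :: bX :: Gw n := rfl

lemma target_word (n : ℕ) : wpow wXXYY n ++ [bX, bX] = bX :: bX :: Gw n := by
  induction n with
  | zero => rfl
  | succ n ih =>
    show (wXXYY ++ wpow wXXYY n) ++ [bX, bX] = bX :: bX :: Gw (n+1)
    rw [List.append_assoc, ih, gw_cons]
    rfl

lemma qE_append (a : Bool) (u v : List Bool) : qE a (u ++ v) = qE a u + qE a v := by
  simp [qE]

lemma qE_yw_x (k : ℕ) : qE bX (Yw k) = 0 := by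
  induction k with
  | zero => rfl
  | succ k ih =>
    show qE bX (wYX ++ wpow wYX k) = 0
    rw [qE_append]; rw [Yw] at ih; rw [ih]; rfl

lemma qE_yw_y (k : ℕ) : qE bY (Yw k) = 0 := by
  induction k with
  | zero => rfl
  | succ k ih =>
    show qE bY (wYX ++ wpow wYX k) = 0
    rw [qE_append]; rw [Yw] at ih; rw [ih]; rfl

lemma qE_wd_x (k : ℕ) : qE bX (Wd k) = 2 := by
  rw [wd_cons]
  show qbr bX bX + qE bX (Yw k) = 2
  rw [qE_yw_x]; rfl

lemma qE_wd_y (k : ℕ) : qE bY (Wd k) = -2 := by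
  rw [wd_cons]
  show qbr bY bX + qE bY (Yw k) = -2
  rw [qE_yw_y]; rfl

variable {F : Type*} [Field F] (q : F)

lemma qsh_nil_right (u : List Bool) : qsh q u [] = Finsupp.single u 1 := by
  cases u <;> rw [qsh]

lemma qsh_nil_left (v : List Bool) : qsh q [] v = Finsupp.single v 1 := by
  rw [qsh]

lemma qcons_single (a : Bool) (w : List Bool) :
    qcons F a (Finsupp.single w (1 : F)) = Finsupp.single (a :: w) 1 := by
  simp [qcons, Finsupp.lmapDomain_apply, Finsupp.mapDomain_single]

lemma neg_pow_succ_smul (k : ℕ) (x : List Bool →₀ F) :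
    ((-1 : F) ^ (k + 1)) • x = -(((-1 : F) ^ k) • x) := by
  rw [pow_succ, mul_neg_one, neg_smul]

/-- Expansion of `P(k,m) = qsh (Wd k) (Wd m)`. -/
lemma qshP (k m : ℕ) : qsh q (Wd k) (Wd m) =
    qcons F bX (qsh q (Yw k) (Wd m)) + (q ^ (2 : ℤ)) • qcons F bX (qsh q (Wd k) (Yw m)) := by
  have h : qbr bX bX + qE bX (Yw k) = 2 := by rw [qE_yw_x]; decide
  conv_lhs => rw [wd_cons k, wd_cons m, qsh]
  rw [← wd_cons k, ← wd_cons m, h]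

/-- Expansion of `A(k+1,m) = qsh (Yw (k+1)) (Wd m)`. -/
lemma qshA (k m : ℕ) : qsh q (Yw (k + 1)) (Wd m) =
    qcons F bY (qsh q (Wd k) (Wd m)) + qcons F bX (qsh q (Yw (k + 1)) (Yw m)) := by
  have h : qbr bX bY + qE bX (Wd k) = 0 := by rw [qE_wd_x]; decide
  conv_lhs => rw [yw_cons k, wd_cons m, qsh]
  rw [← yw_cons k, ← wd_cons m, h, zpow_zero, one_smul]

/-- Expansion of `B(k,m+1) = qsh (Wd k) (Yw (m+1))`. -/
lemma qshB (k m : ℕ) : qsh q (Wd k) (Yw (m + 1)) =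
    qcons F bX (qsh q (Yw k) (Yw (m + 1))) +
      (q ^ (-2 : ℤ)) • qcons F bY (qsh q (Wd k) (Wd m)) := by
  have h : qbr bY bX + qE bY (Yw k) = -2 := by rw [qE_yw_y]; decide
  conv_lhs => rw [wd_cons k, yw_cons m, qsh]
  rw [← wd_cons k, ← yw_cons m, h]

/-- Expansion of `C(k+1,m+1) = qsh (Yw (k+1)) (Yw (m+1))`. -/
lemma qshC (k m : ℕ) : qsh q (Yw (k + 1)) (Yw (m + 1)) =
    qcons F bY (qsh q (Wd k) (Yw (m + 1))) + qcons F bY (qsh q (Yw (k + 1)) (Wd m)) := by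
  have h : qbr bY bY + qE bY (Wd k) = 0 := by rw [qE_wd_y]; decide
  conv_lhs => rw [yw_cons k, yw_cons m, qsh]
  rw [← yw_cons k, ← yw_cons m, h, zpow_zero, one_smul]

/-- Signed sums. -/
def SP (m : ℕ) : List Bool →₀ F :=
  ∑ k ∈ Finset.range (m + 1), ((-1 : F) ^ k) • qsh q (Wd k) (Wd (m - k))
def SA (m : ℕ) : List Bool →₀ F :=
  ∑ k ∈ Finset.range (m + 1), ((-1 : F) ^ k) • qsh q (Yw k) (Wd (m - k))
def SB (m : ℕ) : List Bool →₀ F :=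
  ∑ k ∈ Finset.range (m + 1), ((-1 : F) ^ k) • qsh q (Wd k) (Yw (m - k))
def SC (m : ℕ) : List Bool →₀ F :=
  ∑ k ∈ Finset.range (m + 1), ((-1 : F) ^ k) • qsh q (Yw k) (Yw (m - k))

lemma qcons_signed_sum (a : Bool) (s : Finset ℕ) (g : ℕ → List Bool →₀ F) :
    qcons F a (∑ k ∈ s, ((-1 : F) ^ k) • g k) =
      ∑ k ∈ s, ((-1 : F) ^ k) • qcons F a (g k) := by
  rw [map_sum]
  exact Finset.sum_congr rfl fun k _ => map_smul _ _ _

lemma SA_base : SA q 0 = Finsupp.single [bX] 1 := by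
  rw [SA]
  simp [Yw, Wd, wpow, wXY, qsh_nil_left]

lemma SB_base : SB q 0 = Finsupp.single [bX] 1 := by
  rw [SB]
  simp [Yw, Wd, wpow, wXY, qsh_nil_right]

lemma SC_base : SC q 0 = Finsupp.single [] 1 := by
  rw [SC]
  simp [Yw, wpow, qsh_nil_left]

lemma SP_eq (m : ℕ) :
    SP q m = qcons F bX (SA q m) + (q ^ (2 : ℤ)) • qcons F bX (SB q m) := by
  rw [SP, SA, SB, qcons_signed_sum, qcons_signed_sum, Finset.smul_sum,
    ← Finset.sum_add_distrib]
  refine Finset.sum_congr rfl fun k _ => ?_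
  rw [qshP, smul_add, smul_comm]

/-- Peel the `k = 0` term of `SC (m+1)`. -/
lemma R_SC_first (a : Bool) (m : ℕ) : qcons F a (SC q (m + 1)) =
    -(∑ k ∈ Finset.range (m + 1),
        ((-1 : F) ^ k) • qcons F a (qsh q (Yw (k + 1)) (Yw (m - k)))) +
      Finsupp.single (a :: Yw (m + 1)) 1 := by
  rw [SC, qcons_signed_sum, Finset.sum_range_succ', ← Finset.sum_neg_distrib]
  congr 1
  · refine Finset.sum_congr rfl fun k _ => ?_
    rw [show m + 1 - (k + 1) = m - k from by omega, neg_pow_succ_smul]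
  · rw [Nat.sub_zero, yw_zero, qsh_nil_left, pow_zero, one_smul, qcons_single]

/-- Peel the `k = m+1` term of `SC (m+1)`. -/
lemma R_SC_last (a : Bool) (m : ℕ) : qcons F a (SC q (m + 1)) =
    (∑ k ∈ Finset.range (m + 1),
        ((-1 : F) ^ k) • qcons F a (qsh q (Yw k) (Yw (m + 1 - k)))) +
      ((-1 : F) ^ (m + 1)) • Finsupp.single (a :: Yw (m + 1)) 1 := by
  rw [SC, qcons_signed_sum, Finset.sum_range_succ]
  congr 1
  rw [Nat.sub_self, yw_zero, qsh_nil_right, qcons_single]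

/-- Peel the `k = 0` term of `SA m` under `qcons bY`. -/
lemma R_SA_first (m : ℕ) : qcons F bY (SA q m) =
    (∑ k ∈ Finset.range m,
        ((-1 : F) ^ (k + 1)) • qcons F bY (qsh q (Yw (k + 1)) (Wd (m - (k + 1))))) +
      Finsupp.single (Yw (m + 1)) 1 := by
  rw [SA, qcons_signed_sum, Finset.sum_range_succ']
  congr 1
  rw [Nat.sub_zero, yw_zero, qsh_nil_left, pow_zero, one_smul, qcons_single, ← yw_cons]

/-- Peel the `k = m` term of `SB m` under `qcons bY`. -/
lemma R_SB_last (m : ℕ) : qcons F bY (SB q m) =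
    (∑ k ∈ Finset.range m,
        ((-1 : F) ^ k) • qcons F bY (qsh q (Wd k) (Yw (m - k)))) +
      ((-1 : F) ^ m) • Finsupp.single (Yw (m + 1)) 1 := by
  rw [SB, qcons_signed_sum, Finset.sum_range_succ]
  congr 1
  rw [Nat.sub_self, yw_zero, qsh_nil_right, qcons_single, ← yw_cons]

lemma SA_succ (m : ℕ) :
    SA q (m + 1) = qcons F bX (SC q (m + 1)) - qcons F bY (SP q m) := by
  rw [SA, Finset.sum_range_succ']
  have hmain : ∀ k ∈ Finset.range (m + 1),
      ((-1 : F) ^ (k + 1)) • qsh q (Yw (k + 1)) (Wd (m + 1 - (k + 1))) =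
        -(((-1 : F) ^ k) • qcons F bY (qsh q (Wd k) (Wd (m - k)))) +
        -(((-1 : F) ^ k) • qcons F bX (qsh q (Yw (k + 1)) (Yw (m - k)))) := by
    intro k _
    rw [show m + 1 - (k + 1) = m - k from by omega, qshA, smul_add,
      neg_pow_succ_smul, neg_pow_succ_smul]
  rw [Finset.sum_congr rfl hmain, Finset.sum_add_distrib, Finset.sum_neg_distrib,
    Finset.sum_neg_distrib, R_SC_first, SP, qcons_signed_sum, ← wd_cons]
  have h0 : ((-1 : F) ^ 0) • qsh q (Yw 0) (Wd (m + 1 - 0)) =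
      Finsupp.single (Wd (m + 1)) 1 := by
    rw [Nat.sub_zero, yw_zero, qsh_nil_left, pow_zero, one_smul]
  rw [h0]
  abel

lemma SB_succ (m : ℕ) :
    SB q (m + 1) = qcons F bX (SC q (m + 1)) + (q ^ (-2 : ℤ)) • qcons F bY (SP q m) := by
  rw [SB, Finset.sum_range_succ]
  have hmain : ∀ k ∈ Finset.range (m + 1),
      ((-1 : F) ^ k) • qsh q (Wd k) (Yw (m + 1 - k)) =
        ((-1 : F) ^ k) • qcons F bX (qsh q (Yw k) (Yw (m + 1 - k))) +
        (q ^ (-2 : ℤ)) • (((-1 : F) ^ k) • qcons F bY (qsh q (Wd k) (Wd (m - k)))) := by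
    intro k hk
    simp only [Finset.mem_range] at hk
    have h4 : m + 1 - k = (m - k) + 1 := by omega
    rw [h4, qshB, smul_add, ← h4, smul_comm]
  rw [Finset.sum_congr rfl hmain, Finset.sum_add_distrib, ← Finset.smul_sum,
    R_SC_last, SP, qcons_signed_sum, ← wd_cons]
  have hlast : ((-1 : F) ^ (m + 1)) • qsh q (Wd (m + 1)) (Yw (m + 1 - (m + 1))) =
      ((-1 : F) ^ (m + 1)) • Finsupp.single (Wd (m + 1)) 1 := by
    rw [Nat.sub_self, yw_zero, qsh_nil_right]
  rw [hlast]
  abel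

lemma SC_succ (m : ℕ) :
    SC q (m + 1) = qcons F bY (SA q m) - qcons F bY (SB q m) := by
  rw [SC, Finset.sum_range_succ', Finset.sum_range_succ]
  have hmain : ∀ k ∈ Finset.range m,
      ((-1 : F) ^ (k + 1)) • qsh q (Yw (k + 1)) (Yw (m + 1 - (k + 1))) =
        -(((-1 : F) ^ k) • qcons F bY (qsh q (Wd k) (Yw (m - k)))) +
        ((-1 : F) ^ (k + 1)) • qcons F bY (qsh q (Yw (k + 1)) (Wd (m - (k + 1)))) := by
    intro k hk
    simp only [Finset.mem_range] at hk
    have h4 : m + 1 - (k + 1) = (m - (k + 1)) + 1 := by omega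
    have h5 : (m - (k + 1)) + 1 = m - k := by omega
    rw [h4, qshC, smul_add, h5, neg_pow_succ_smul]
  rw [Finset.sum_congr rfl hmain, Finset.sum_add_distrib, Finset.sum_neg_distrib,
    R_SA_first, R_SB_last]
  have h0 : ((-1 : F) ^ 0) • qsh q (Yw 0) (Yw (m + 1 - 0)) =
      Finsupp.single (Yw (m + 1)) 1 := by
    rw [Nat.sub_zero, yw_zero, qsh_nil_left, pow_zero, one_smul]
  have hlast : ((-1 : F) ^ (m + 1)) • qsh q (Yw (m + 1)) (Yw (m + 1 - (m + 1))) =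
      -(((-1 : F) ^ m) • Finsupp.single (Yw (m + 1)) 1) := by
    rw [Nat.sub_self, yw_zero, qsh_nil_right, neg_pow_succ_smul]
  rw [h0, hlast]
  abel

lemma key (hq : q ≠ 0) : ∀ n : ℕ,
    SC q (2 * n) = (((-1 : F) ^ n) * (q + q⁻¹) ^ (2 * n)) • Finsupp.single (Gw n) 1 ∧
    SA q (2 * n) = (((-1 : F) ^ n) * (q + q⁻¹) ^ (2 * n)) • Finsupp.single (bX :: Gw n) 1 ∧
    SB q (2 * n) = (((-1 : F) ^ n) * (q + q⁻¹) ^ (2 * n)) • Finsupp.single (bX :: Gw n) 1 ∧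
    SP q (2 * n) = (((-1 : F) ^ n) * q * (q + q⁻¹) ^ (2 * n + 1)) •
      Finsupp.single (bX :: bX :: Gw n) 1 ∧
    SC q (2 * n + 1) = 0 ∧
    SA q (2 * n + 1) = (((-1 : F) ^ (n + 1)) * q * (q + q⁻¹) ^ (2 * n + 1)) •
      Finsupp.single (bY :: bX :: bX :: Gw n) 1 ∧
    SB q (2 * n + 1) = (((-1 : F) ^ n) * q⁻¹ * (q + q⁻¹) ^ (2 * n + 1)) •
      Finsupp.single (bY :: bX :: bX :: Gw n) 1 ∧
    SP q (2 * n + 1) = 0 := by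
  have hz2 : (q : F) ^ (2 : ℤ) = q * q := zpow_two q
  have hzm2 : (q : F) ^ (-2 : ℤ) = (q * q)⁻¹ := by rw [zpow_neg, hz2]
  intro n
  induction n with
  | zero =>
    have hC0 : SC q 0 = Finsupp.single [] 1 := SC_base q
    have hA0 : SA q 0 = Finsupp.single [bX] 1 := SA_base q
    have hB0 : SB q 0 = Finsupp.single [bX] 1 := SB_base q
    have hP0 : SP q 0 = (q * (q + q⁻¹)) • Finsupp.single [bX, bX] 1 := by
      rw [SP_eq, hA0, hB0, qcons_single, hz2,
        show q * (q + q⁻¹) = 1 + q * q by field_simp; ring, add_smul, one_smul]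
    have hC1 : SC q 1 = 0 := by
      rw [show (1 : ℕ) = 0 + 1 from rfl, SC_succ, hA0, hB0, sub_self]
    have hA1 : SA q 1 = (-(q * (q + q⁻¹))) • Finsupp.single [bY, bX, bX] 1 := by
      rw [show (1 : ℕ) = 0 + 1 from rfl, SA_succ, hC1, hP0, map_zero, map_smul,
        qcons_single, zero_sub, ← neg_smul]
    have hB1 : SB q 1 = (q⁻¹ * (q + q⁻¹)) • Finsupp.single [bY, bX, bX] 1 := by
      rw [show (1 : ℕ) = 0 + 1 from rfl, SB_succ, hC1, hP0, map_zero, map_smul,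
        qcons_single, zero_add, hzm2, smul_smul]
      congr 1
      field_simp [hq]
      try ring
    have hP1 : SP q 1 = 0 := by
      rw [show (1 : ℕ) = 0 + 1 from rfl, SP_eq, hA1, hB1, map_smul, map_smul,
        qcons_single, hz2, smul_smul, ← add_smul]
      apply smul_eq_zero_of_left
      field_simp [hq]
      try ring
    refine ⟨?_, ?_, ?_, ?_, ?_, ?_, ?_, ?_⟩ <;>
      simp only [Nat.mul_zero, Nat.zero_add, pow_zero, pow_one, one_mul, mul_one,
        hC0, hA0, hB0, hP0, hC1, hA1, hB1, hP1, Gw, wpow, one_smul] <;>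
      first
        | rfl
        | (congr 1; ring)
  | succ n ih =>
    obtain ⟨ihC, ihA, ihB, ihP, ihC1, ihA1, ihB1, ihP1⟩ := ih
    have e2 : 2 * (n + 1) = (2 * n + 1) + 1 := by ring
    have hC : SC q (2 * (n + 1)) =
        (((-1 : F) ^ (n + 1)) * (q + q⁻¹) ^ (2 * (n + 1))) •
          Finsupp.single (Gw (n + 1)) 1 := by
      rw [e2, SC_succ, ihA1, ihB1, map_smul, map_smul, qcons_single, ← sub_smul,
        ← gw_cons, ← e2]
      congr 1
      rw [e2]
      simp only [pow_succ]
      field_simp [hq]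
      try ring
    have hA : SA q (2 * (n + 1)) =
        (((-1 : F) ^ (n + 1)) * (q + q⁻¹) ^ (2 * (n + 1))) •
          Finsupp.single (bX :: Gw (n + 1)) 1 := by
      rw [e2, SA_succ, ← e2, hC, ihP1, map_zero, sub_zero, map_smul, qcons_single]
    have hB : SB q (2 * (n + 1)) =
        (((-1 : F) ^ (n + 1)) * (q + q⁻¹) ^ (2 * (n + 1))) •
          Finsupp.single (bX :: Gw (n + 1)) 1 := by
      rw [e2, SB_succ, ← e2, hC, ihP1, map_zero, smul_zero, add_zero, map_smul,
        qcons_single]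
    have hP : SP q (2 * (n + 1)) =
        (((-1 : F) ^ (n + 1)) * q * (q + q⁻¹) ^ (2 * (n + 1) + 1)) •
          Finsupp.single (bX :: bX :: Gw (n + 1)) 1 := by
      rw [SP_eq, hA, hB, map_smul, qcons_single, hz2, smul_smul, ← add_smul]
      congr 1
      simp only [pow_succ]
      field_simp [hq]
      try ring
    have hC1 : SC q (2 * (n + 1) + 1) = 0 := by
      rw [show 2 * (n + 1) + 1 = (2 * (n + 1)) + 1 from rfl, SC_succ, hA, hB, sub_self]
    have hA1 : SA q (2 * (n + 1) + 1) =
        (((-1 : F) ^ (n + 1 + 1)) * q * (q + q⁻¹) ^ (2 * (n + 1) + 1)) •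
          Finsupp.single (bY :: bX :: bX :: Gw (n + 1)) 1 := by
      rw [show 2 * (n + 1) + 1 = (2 * (n + 1)) + 1 from rfl, SA_succ,
        ← show 2 * (n + 1) + 1 = (2 * (n + 1)) + 1 from rfl, hC1, hP, map_zero,
        map_smul, qcons_single, zero_sub, ← neg_smul]
      congr 1
      simp only [pow_succ]
      ring
    have hB1 : SB q (2 * (n + 1) + 1) =
        (((-1 : F) ^ (n + 1)) * q⁻¹ * (q + q⁻¹) ^ (2 * (n + 1) + 1)) •
          Finsupp.single (bY :: bX :: bX :: Gw (n + 1)) 1 := by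
      rw [show 2 * (n + 1) + 1 = (2 * (n + 1)) + 1 from rfl, SB_succ,
        ← show 2 * (n + 1) + 1 = (2 * (n + 1)) + 1 from rfl, hC1, hP, map_zero,
        zero_add, map_smul, qcons_single, hzm2, smul_smul]
      congr 1
      field_simp [hq]
      try ring
    have hP1 : SP q (2 * (n + 1) + 1) = 0 := by
      rw [show 2 * (n + 1) + 1 = (2 * (n + 1)) + 1 from rfl, SP_eq,
        ← show 2 * (n + 1) + 1 = (2 * (n + 1)) + 1 from rfl, hA1, hB1, map_smul,
        map_smul, qcons_single, hz2, smul_smul, ← add_smul]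
      apply smul_eq_zero_of_left
      simp only [pow_succ]
      field_simp [hq]
      try ring
    exact ⟨hC, hA, hB, hP, hC1, hA1, hB1, hP1⟩

end QShuffleAux

/-- `Σ_{k=0}^{2n} (−1)^k W_{−k} ⋆ W_{k−2n} = (−1)^n q [2]_q^{2n+1} (xxyy)^n xx`
where `W_{−k} = (xy)^k x`, so `W_{k−2n} = (xy)^{2n−k} x` for `0 ≤ k ≤ 2n`. -/
theorem stmt9 {F : Type*} [Field F] [CharZero F] (q : F) (hq : q ≠ 0)
    (hq1 : ∀ m : ℕ, 0 < m → q ^ m ≠ 1) (n : ℕ) :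
    ∑ k ∈ Finset.range (2 * n + 1),
        ((-1 : F) ^ k) • qsh q (wpow wXY k ++ [bX]) (wpow wXY (2 * n - k) ++ [bX])
      = ((-1 : F) ^ n * q * (q + q⁻¹) ^ (2 * n + 1)) •
          Finsupp.single (wpow wXXYY n ++ [bX, bX]) (1 : F) := by
  have h := (QShuffleAux.key q hq n).2.2.2.1
  rw [QShuffleAux.target_word]
  exact h
end
end

section
/- In the q-shuffle algebra V on letters x, y, define Gₖ = (yx)^k and G̃ₖ = (xy)^k (concatenation powers, G₀ = G̃₀ = 1). Then for every natural number n, Σ_{k=0}^{2n+2} (−1)^k Gₖ ⋆ G̃_{2n+2−k} = (−1)^{n+1} [2]_q^{2n+1} ( q^{-1} · xyy(xxyy)^n x + q · y(xxyy)^n xxy ), where [2]_q = q + q^{-1} and the words on the right are concatenation words. -/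
noncomputable section

namespace QS
variable {F : Type*} [Field F] (q : F)

/-- x(yx)^k -/
def wA (k : ℕ) : List Bool := bX :: wpow wYX k
/-- y(xy)^k -/
def wB (k : ℕ) : List Bool := bY :: wpow wXY k

lemma wA_def (k : ℕ) : wA k = bX :: wpow wYX k := rfl
lemma wB_def (k : ℕ) : wB k = bY :: wpow wXY k := rfl

lemma qcons_single (a : Bool) (w : List Bool) (c : F) :
    qcons F a (Finsupp.single w c) = Finsupp.single (a :: w) c := by
  simp [qcons, Finsupp.lmapDomain, Finsupp.mapDomain_single]

lemma qsh_nil (v : List Bool) : qsh q [] v = Finsupp.single v 1 := by rw [qsh]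
lemma qsh_nil' (a : Bool) (u : List Bool) : qsh q (a :: u) [] = Finsupp.single (a :: u) 1 := by
  rw [qsh]
lemma qsh_nil_r (u : List Bool) : qsh q u [] = Finsupp.single u 1 := by
  cases u <;> rw [qsh]
lemma qsh_cons (a b : Bool) (u v : List Bool) : qsh q (a :: u) (b :: v) =
    qcons F a (qsh q u (b :: v)) + (q ^ (qbr b a + qE b u)) • qcons F b (qsh q (a :: u) v) := by
  rw [qsh]

@[simp] lemma qbr_XX : qbr bX bX = 2 := rfl
@[simp] lemma qbr_YY : qbr bY bY = 2 := rfl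
@[simp] lemma qbr_XY : qbr bX bY = -2 := rfl
@[simp] lemma qbr_YX : qbr bY bX = -2 := rfl

@[simp] lemma qE_nil (a : Bool) : qE a [] = 0 := rfl
@[simp] lemma qE_cons (a b : Bool) (w : List Bool) : qE a (b :: w) = qbr a b + qE a w := by
  simp [qE]

lemma wpow_succ (w : List Bool) (n : ℕ) : wpow w (n+1) = w ++ wpow w n := rfl
@[simp] lemma wpow_zero (w : List Bool) : wpow w 0 = [] := rfl
lemma wpow_YX_succ (k : ℕ) : wpow wYX (k+1) = bY :: wA k := rfl
lemma wpow_XY_succ (k : ℕ) : wpow wXY (k+1) = bX :: wB k := rfl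

@[simp] lemma qE_X_YX (k : ℕ) : qE bX (wpow wYX k) = 0 := by
  induction k with
  | zero => rfl
  | succ k ih => rw [wpow_YX_succ]; simp [wA, ih]
@[simp] lemma qE_Y_YX (k : ℕ) : qE bY (wpow wYX k) = 0 := by
  induction k with
  | zero => rfl
  | succ k ih => rw [wpow_YX_succ]; simp [wA, ih]

lemma L1 (k m : ℕ) : qsh q (wpow wYX (k+1)) (wpow wXY (m+1)) =
    qcons F bY (qsh q (wA k) (wpow wXY (m+1))) +
      qcons F bX (qsh q (wpow wYX (k+1)) (wB m)) := by
  rw [wpow_YX_succ, wpow_XY_succ, qsh_cons]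
  rw [show qbr bX bY + qE bX (wA k) = 0 by simp [wA]]
  rw [← wpow_YX_succ]; simp

lemma L2 (k m : ℕ) : qsh q (wA k) (wpow wXY (m+1)) =
    qcons F bX (qsh q (wpow wYX k) (wpow wXY (m+1))) +
      (q ^ (2:ℤ)) • qcons F bX (qsh q (wA k) (wB m)) := by
  rw [wA_def, wpow_XY_succ, qsh_cons]
  rw [show qbr bX bX + qE bX (wpow wYX k) = 2 by simp]

lemma L3 (k m : ℕ) : qsh q (wpow wYX (k+1)) (wB m) =
    qcons F bY (qsh q (wA k) (wB m)) +
      qcons F bY (qsh q (wpow wYX (k+1)) (wpow wXY m)) := by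
  rw [wpow_YX_succ, wB_def, qsh_cons]
  rw [show qbr bY bY + qE bY (wA k) = 0 by simp [wA]]
  rw [← wpow_YX_succ, ← wB_def]; simp

lemma L4 (k m : ℕ) : qsh q (wA k) (wB m) =
    qcons F bX (qsh q (wpow wYX k) (wB m)) +
      (q ^ (-2:ℤ)) • qcons F bY (qsh q (wA k) (wpow wXY m)) := by
  rw [wA_def, wB_def, qsh_cons]
  rw [show qbr bY bX + qE bY (wpow wYX k) = -2 by simp]

/-- Alternating sums -/
def sS (N : ℕ) : List Bool →₀ F :=
  ∑ k ∈ Finset.range (N+1), ((-1:F)^k) • qsh q (wpow wYX k) (wpow wXY (N-k))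
def sA (N : ℕ) : List Bool →₀ F :=
  ∑ k ∈ Finset.range (N+1), ((-1:F)^k) • qsh q (wA k) (wpow wXY (N-k))
def sB (N : ℕ) : List Bool →₀ F :=
  ∑ k ∈ Finset.range (N+1), ((-1:F)^k) • qsh q (wpow wYX k) (wB (N-k))
def sC (N : ℕ) : List Bool →₀ F :=
  ∑ k ∈ Finset.range (N+1), ((-1:F)^k) • qsh q (wA k) (wB (N-k))

lemma sS_def (N : ℕ) : sS q N =
  ∑ k ∈ Finset.range (N+1), ((-1:F)^k) • qsh q (wpow wYX k) (wpow wXY (N-k)) := rfl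
lemma sA_def (N : ℕ) : sA q N =
  ∑ k ∈ Finset.range (N+1), ((-1:F)^k) • qsh q (wA k) (wpow wXY (N-k)) := rfl
lemma sB_def (N : ℕ) : sB q N =
  ∑ k ∈ Finset.range (N+1), ((-1:F)^k) • qsh q (wpow wYX k) (wB (N-k)) := rfl
lemma sC_def (N : ℕ) : sC q N =
  ∑ k ∈ Finset.range (N+1), ((-1:F)^k) • qsh q (wA k) (wB (N-k)) := rfl

lemma R4 (N : ℕ) : sC q N = qcons F bX (sB q N) + (q ^ (-2:ℤ)) • qcons F bY (sA q N) := by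
  rw [sC_def, sB_def, sA_def, map_sum, map_sum, Finset.smul_sum, ← Finset.sum_add_distrib]
  refine Finset.sum_congr rfl fun k hk => ?_
  rw [map_smul, map_smul, L4, smul_add, smul_comm]

lemma R2 (N : ℕ) : sA q (N+1) =
    qcons F bX (sS q (N+1)) + (q ^ (2:ℤ)) • qcons F bX (sC q N) := by
  have h1 : ∀ k ∈ Finset.range (N+1), ((-1:F)^k) • qsh q (wA k) (wpow wXY (N+1-k)) =
      qcons F bX (((-1:F)^k) • qsh q (wpow wYX k) (wpow wXY (N+1-k))) +
        (q ^ (2:ℤ)) • qcons F bX (((-1:F)^k) • qsh q (wA k) (wB (N-k))) := by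
    intro k hk
    have hk' : N+1-k = (N-k)+1 := by rw [Finset.mem_range] at hk; omega
    rw [map_smul, map_smul, hk', L2, smul_add, smul_comm]
  have h2 : ((-1:F)^(N+1)) • qsh q (wA (N+1)) (wpow wXY (N+1-(N+1))) =
      qcons F bX (((-1:F)^(N+1)) • qsh q (wpow wYX (N+1)) (wpow wXY (N+1-(N+1)))) := by
    rw [map_smul, Nat.sub_self, wpow_zero, wA_def, qsh_nil_r, qsh_nil_r, qcons_single]
  conv_lhs => rw [sA_def, Finset.sum_range_succ, Finset.sum_congr rfl h1,
    Finset.sum_add_distrib, ← map_sum, ← Finset.smul_sum, ← map_sum, h2]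
  conv_rhs => rw [sS_def, Finset.sum_range_succ, map_add, sC_def]
  abel

lemma R3 (N : ℕ) : sB q (N+1) =
    qcons F bY (sS q (N+1)) - qcons F bY (sC q N) := by
  have h1 : ∀ i ∈ Finset.range (N+1),
      ((-1:F)^(i+1)) • qsh q (wpow wYX (i+1)) (wB (N+1-(i+1))) =
      qcons F bY (((-1:F)^(i+1)) • qsh q (wA i) (wB (N-i))) +
        qcons F bY (((-1:F)^(i+1)) • qsh q (wpow wYX (i+1)) (wpow wXY (N+1-(i+1)))) := by
    intro i hi
    have e1 : N+1-(i+1) = N-i := by omega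
    rw [map_smul, map_smul, e1, L3, smul_add]
  have h2 : ((-1:F)^0) • qsh q (wpow wYX 0) (wB (N+1-0)) =
      qcons F bY (((-1:F)^0) • qsh q (wpow wYX 0) (wpow wXY (N+1-0))) := by
    rw [map_smul, wpow_zero, qsh_nil, qsh_nil, wB_def, qcons_single]
  have h3 : ∀ i ∈ Finset.range (N+1),
      qcons F bY (((-1:F)^(i+1)) • qsh q (wA i) (wB (N-i))) =
      -qcons F bY (((-1:F)^i) • qsh q (wA i) (wB (N-i))) := by
    intro i _
    rw [pow_succ, mul_comm, mul_smul, neg_one_smul, map_neg]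
  conv_lhs => rw [sB_def, Finset.sum_range_succ', Finset.sum_congr rfl h1,
    Finset.sum_add_distrib, h2, Finset.sum_congr rfl h3, Finset.sum_neg_distrib,
    ← map_sum, ← map_sum]
  conv_rhs => rw [sS_def, Finset.sum_range_succ', map_add, sC_def]
  abel

lemma R1 (N : ℕ) : sS q (N+1) = qcons F bX (sB q N) - qcons F bY (sA q N) := by
  have h1 : ∀ i ∈ Finset.range N,
      ((-1:F)^(i+1)) • qsh q (wpow wYX (i+1)) (wpow wXY (N+1-(i+1))) =
      qcons F bY (((-1:F)^(i+1)) • qsh q (wA i) (wpow wXY (N-i))) +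
        qcons F bX (((-1:F)^(i+1)) • qsh q (wpow wYX (i+1)) (wB (N-(i+1)))) := by
    intro i hi
    rw [Finset.mem_range] at hi
    have e1 : N+1-(i+1) = (N-(i+1))+1 := by omega
    have e2 : (N-(i+1))+1 = N-i := by omega
    rw [map_smul, map_smul, e1, L1, e2, smul_add]
  have h2 : ((-1:F)^(N+1)) • qsh q (wpow wYX (N+1)) (wpow wXY (N+1-(N+1))) =
      -qcons F bY (((-1:F)^N) • qsh q (wA N) (wpow wXY (N-N))) := by
    rw [map_smul, Nat.sub_self, Nat.sub_self, wpow_zero, wpow_YX_succ, qsh_nil_r, qsh_nil_r,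
      qcons_single, pow_succ, mul_comm, mul_smul, neg_one_smul]
  have h3 : ((-1:F)^0) • qsh q (wpow wYX 0) (wpow wXY (N+1-0)) =
      qcons F bX (((-1:F)^0) • qsh q (wpow wYX 0) (wB (N-0))) := by
    rw [map_smul, wpow_zero, qsh_nil, qsh_nil]
    have e : wpow wXY (N+1-0) = bX :: wB (N-0) := wpow_XY_succ N
    rw [e, qcons_single]
  have h3' : ∀ i ∈ Finset.range N,
      qcons F bY (((-1:F)^(i+1)) • qsh q (wA i) (wpow wXY (N-i))) =
      -qcons F bY (((-1:F)^i) • qsh q (wA i) (wpow wXY (N-i))) := by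
    intro i _
    rw [pow_succ, mul_comm, mul_smul, neg_one_smul, map_neg]
  conv_lhs => rw [sS_def, Finset.sum_range_succ', Finset.sum_range_succ,
    Finset.sum_congr rfl h1, Finset.sum_add_distrib, h2, h3,
    Finset.sum_congr rfl h3', Finset.sum_neg_distrib]
  conv_rhs => rw [sB_def, sA_def, map_sum, map_sum,
    Finset.sum_range_succ' (fun k => qcons F bX (((-1:F)^k) • qsh q (wpow wYX k) (wB (N-k)))) N,
    Finset.sum_range_succ (fun k => qcons F bY (((-1:F)^k) • qsh q (wA k) (wpow wXY (N-k)))) N]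
  abel

lemma sA_zero : sA q 0 = Finsupp.single [bX] 1 := by
  rw [sA_def]
  simp [wA_def, qsh_nil_r]

lemma sB_zero : sB q 0 = Finsupp.single [bY] 1 := by
  rw [sB_def]
  simp [wB_def, qsh_nil]

lemma hq2 : q ^ (2:ℤ) = q * q := by
  rw [show (2:ℤ) = ((2:ℕ):ℤ) from rfl, zpow_natCast, pow_two]

lemma hqm2 : q ^ (-2:ℤ) = q⁻¹ * q⁻¹ := by
  rw [show (-2:ℤ) = -((2:ℕ):ℤ) from rfl, zpow_neg, zpow_natCast, pow_two, mul_inv]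

lemma chain (hq : q ≠ 0) (n : ℕ)
    (hA : sA q (2*n) = ((-1:F)^n * (q+q⁻¹)^(2*n)) • Finsupp.single (wpow wXXYY n ++ [bX]) 1)
    (hB : sB q (2*n) = ((-1:F)^n * (q+q⁻¹)^(2*n)) • Finsupp.single (wpow wYYXX n ++ [bY]) 1) :
    sS q (2*n+2) = ((-1:F)^(n+1) * (q+q⁻¹)^(2*n+1)) •
        (q⁻¹ • Finsupp.single (bX :: bY :: bY :: (wpow wXXYY n ++ [bX])) 1
          + q • Finsupp.single (bY :: bX :: bX :: (wpow wYYXX n ++ [bY])) 1)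
    ∧ sA q (2*n+2) =
        ((-1:F)^(n+1) * (q+q⁻¹)^(2*(n+1))) • Finsupp.single (wpow wXXYY (n+1) ++ [bX]) 1
    ∧ sB q (2*n+2) =
        ((-1:F)^(n+1) * (q+q⁻¹)^(2*(n+1))) • Finsupp.single (wpow wYYXX (n+1) ++ [bY]) 1 := by
  have hqq : q * q⁻¹ = 1 := mul_inv_cancel₀ hq
  have hC0 : sC q (2*n) = ((-1:F)^n * (q+q⁻¹)^(2*n)) •
      (Finsupp.single (bX :: (wpow wYYXX n ++ [bY])) (1:F)
        + (q⁻¹ * q⁻¹) • Finsupp.single (bY :: (wpow wXXYY n ++ [bX])) 1) := by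
    rw [R4, hA, hB, map_smul, qcons_single, map_smul, qcons_single, hqm2]
    match_scalars <;> ring
  have hS1 : sS q (2*n+1) = ((-1:F)^n * (q+q⁻¹)^(2*n)) •
      (Finsupp.single (bX :: (wpow wYYXX n ++ [bY])) (1:F)
        - Finsupp.single (bY :: (wpow wXXYY n ++ [bX])) 1) := by
    rw [show (2*n+1) = (2*n)+1 from rfl, R1, hA, hB, map_smul, qcons_single, map_smul,
      qcons_single]
    match_scalars <;> ring
  have hA1 : sA q (2*n+1) = ((-1:F)^n * q * (q+q⁻¹)^(2*n+1)) •
      Finsupp.single (bX :: bX :: (wpow wYYXX n ++ [bY])) 1 := by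
    rw [show (2*n+1) = (2*n)+1 from rfl, R2, hS1, hC0, hq2]
    simp only [map_smul, map_add, map_sub, qcons_single, smul_add, smul_sub]
    match_scalars
    · linear_combination (-((-1:F)^n * (q+q⁻¹)^(2*n))) * hqq
    · linear_combination ((q*q⁻¹+1) * ((-1:F)^n * (q+q⁻¹)^(2*n))) * hqq
  have hB1 : sB q (2*n+1) = (-((-1:F)^n) * q⁻¹ * (q+q⁻¹)^(2*n+1)) •
      Finsupp.single (bY :: bY :: (wpow wXXYY n ++ [bX])) 1 := by
    rw [show (2*n+1) = (2*n)+1 from rfl, R3, hS1, hC0]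
    simp only [map_smul, map_add, map_sub, qcons_single, smul_add, smul_sub]
    match_scalars
    · ring
    · linear_combination ((-1:F)^n * (q+q⁻¹)^(2*n)) * hqq
  have hS2 : sS q (2*n+2) = ((-1:F)^(n+1) * (q+q⁻¹)^(2*n+1)) •
      (q⁻¹ • Finsupp.single (bX :: bY :: bY :: (wpow wXXYY n ++ [bX])) 1
        + q • Finsupp.single (bY :: bX :: bX :: (wpow wYYXX n ++ [bY])) 1) := by
    rw [show (2*n+2) = (2*n+1)+1 from rfl, R1, hA1, hB1]
    simp only [map_smul, qcons_single, smul_add, smul_smul]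
    match_scalars <;> ring
  have hC1 : sC q (2*n+1) = ((-1:F)^n * q⁻¹ * (q+q⁻¹)^(2*n+1)) •
      (Finsupp.single (bY :: bX :: bX :: (wpow wYYXX n ++ [bY])) (1:F)
        - Finsupp.single (bX :: bY :: bY :: (wpow wXXYY n ++ [bX])) 1) := by
    rw [R4, hA1, hB1, hqm2]
    simp only [map_smul, qcons_single, smul_sub, smul_smul]
    match_scalars
    · ring
    · linear_combination ((-1:F)^n * q⁻¹ * (q+q⁻¹)^(2*n+1)) * hqq
  have eA : wpow wXXYY (n+1) ++ [bX] = bX :: bX :: bY :: bY :: (wpow wXXYY n ++ [bX]) := by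
    simp [wpow_succ, wXXYY, List.append_assoc]
  have eB : wpow wYYXX (n+1) ++ [bY] = bY :: bY :: bX :: bX :: (wpow wYYXX n ++ [bY]) := by
    simp [wpow_succ, wYYXX, List.append_assoc]
  refine ⟨hS2, ?_, ?_⟩
  · rw [show (2*n+2) = (2*n+1)+1 from rfl, R2, hS2, hC1, hq2, eA]
    simp only [map_smul, map_add, map_sub, qcons_single, smul_add, smul_sub, smul_smul]
    match_scalars
    · linear_combination (-((-1:F)^n * q * (q+q⁻¹)^(2*n+1))) * hqq
    · linear_combination ((-1:F)^n * q * (q+q⁻¹)^(2*n+1)) * hqq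
  · rw [show (2*n+2) = (2*n+1)+1 from rfl, R3, hS2, hC1, eB]
    simp only [map_smul, map_add, map_sub, qcons_single, smul_add, smul_sub, smul_smul]
    match_scalars
    · ring
    · ring

lemma ABclosed (hq : q ≠ 0) (n : ℕ) :
    sA q (2*n) = ((-1:F)^n * (q+q⁻¹)^(2*n)) • Finsupp.single (wpow wXXYY n ++ [bX]) 1
    ∧ sB q (2*n) = ((-1:F)^n * (q+q⁻¹)^(2*n)) • Finsupp.single (wpow wYYXX n ++ [bY]) 1 := by
  induction n with
  | zero =>
    constructor
    · rw [show 2*0 = 0 from rfl, sA_zero]; simp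
    · rw [show 2*0 = 0 from rfl, sB_zero]; simp
  | succ n ih =>
    obtain ⟨-, h2, h3⟩ := chain q hq n ih.1 ih.2
    rw [show 2*(n+1) = 2*n+2 from by ring]
    exact ⟨h2, h3⟩

lemma main (hq : q ≠ 0) (n : ℕ) :
    sS q (2*n+2) = ((-1:F)^(n+1) * (q+q⁻¹)^(2*n+1)) •
        (q⁻¹ • Finsupp.single (bX :: bY :: bY :: (wpow wXXYY n ++ [bX])) 1
          + q • Finsupp.single (bY :: bX :: bX :: (wpow wYYXX n ++ [bY])) 1) :=
  (chain q hq n (ABclosed q hq n).1 (ABclosed q hq n).2).1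

lemma shiftXX (n : ℕ) (l : List Bool) :
    wpow wXXYY n ++ (bX :: bX :: l) = bX :: bX :: (wpow wYYXX n ++ l) := by
  induction n generalizing l with
  | zero => simp
  | succ n ih =>
    show ([bX,bX,bY,bY] ++ wpow wXXYY n) ++ (bX::bX::l) = _
    rw [List.append_assoc, ih]
    simp [wpow_succ, wYYXX]

end QS

/-- `Σ_{k=0}^{2n+2} (−1)^k Gₖ ⋆ G̃_{2n+2−k}
      = (−1)^{n+1} [2]_q^{2n+1} (q^{-1} xyy(xxyy)^n x + q y(xxyy)^n xxy)`,
where `Gₖ = (yx)^k` and `G̃ₖ = (xy)^k`. -/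
theorem stmt13 {F : Type*} [Field F] [CharZero F] (q : F) (hq : q ≠ 0)
    (hq1 : ∀ m : ℕ, 0 < m → q ^ m ≠ 1) (n : ℕ) :
    ∑ k ∈ Finset.range (2 * n + 3),
        ((-1 : F) ^ k) • qsh q (wpow wYX k) (wpow wXY (2 * n + 2 - k))
      = ((-1 : F) ^ (n + 1) * (q + q⁻¹) ^ (2 * n + 1)) •
          (q⁻¹ • Finsupp.single ([bX, bY, bY] ++ wpow wXXYY n ++ [bX]) (1 : F)
            + q • Finsupp.single ([bY] ++ wpow wXXYY n ++ [bX, bX, bY]) (1 : F)) := by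
  have e1 : ([bX, bY, bY] ++ wpow wXXYY n ++ [bX] : List Bool)
      = bX :: bY :: bY :: (wpow wXXYY n ++ [bX]) := by simp
  have e2 : ([bY] ++ wpow wXXYY n ++ [bX, bX, bY] : List Bool)
      = bY :: bX :: bX :: (wpow wYYXX n ++ [bY]) := by
    rw [List.append_assoc, QS.shiftXX n [bY]]
    simp
  rw [e1, e2]
  exact QS.main q hq n
end
end

section
/- In the q-shuffle algebra V on letters x, y, define W_{−k} = (xy)^k x and W_{k+1} = (yx)^k y (concatenation). Then for every natural number n, Σ_{k=0}^{2n+1} (−1)^k W_{k+1} ⋆ W_{k−2n−1} = (−1)^n q^{-1} [2]_q^{2n+1} ( xyy(xxyy)^n x − yxx(yyxx)^n y ), where [2]_q = q + q^{-1} and the words on the right are concatenation words. -/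
noncomputable section

namespace Stmt15Aux

open Finsupp Finset

variable {F : Type*} [Field F]

/-- `(xy)^m x` -/
def la (m : ℕ) : List Bool := wpow wXY m ++ [bX]
/-- `(yx)^k y` -/
def lb (k : ℕ) : List Bool := wpow wYX k ++ [bY]
/-- `(xy)^k` -/
def lc (k : ℕ) : List Bool := wpow wXY k
/-- `(yx)^k` -/
def ld (k : ℕ) : List Bool := wpow wYX k

lemma lb_cons (k : ℕ) : lb k = bY :: lc k := by
  induction k with
  | zero => rfl
  | succ k ih =>
      simp only [lb, lc, wpow, wYX, wXY, List.cons_append, List.append_assoc] at ih ⊢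
      simp [ih]

lemma la_cons (m : ℕ) : la m = bX :: ld m := by
  induction m with
  | zero => rfl
  | succ m ih =>
      simp only [la, ld, wpow, wYX, wXY, List.cons_append, List.append_assoc] at ih ⊢
      simp [ih]

lemma lc_succ (k : ℕ) : lc (k + 1) = bX :: lb k := by
  rw [lb_cons]; rfl

lemma ld_succ (m : ℕ) : ld (m + 1) = bY :: la m := by
  rw [la_cons]; rfl

lemma lc_zero : lc 0 = [] := rfl
lemma ld_zero : ld 0 = [] := rfl

lemma qE_append (a : Bool) (u v : List Bool) : qE a (u ++ v) = qE a u + qE a v := by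
  simp [qE]

lemma qE_wpow_XY (a : Bool) (k : ℕ) : qE a (wpow wXY k) = 0 := by
  induction k with
  | zero => rfl
  | succ k ih =>
      show qE a (wXY ++ wpow wXY k) = 0
      rw [qE_append, ih]
      cases a <;> simp [qE, wXY, qbr, bX, bY]

lemma qE_wpow_YX (a : Bool) (k : ℕ) : qE a (wpow wYX k) = 0 := by
  induction k with
  | zero => rfl
  | succ k ih =>
      show qE a (wYX ++ wpow wYX k) = 0
      rw [qE_append, ih]
      cases a <;> simp [qE, wYX, qbr, bX, bY]

lemma qE_lc (a : Bool) (k : ℕ) : qE a (lc k) = 0 := qE_wpow_XY a k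

lemma qE_lb_X (k : ℕ) : qE bX (lb k) = -2 := by
  rw [lb]; rw [qE_append, qE_wpow_YX]; simp [qE, qbr, bX, bY]

lemma qE_lb_Y (k : ℕ) : qE bY (lb k) = 2 := by
  rw [lb]; rw [qE_append, qE_wpow_YX]; simp [qE, qbr, bX, bY]

lemma qsh_nil (q : F) (v : List Bool) : qsh q [] v = Finsupp.single v 1 := by rw [qsh]

lemma qsh_nil' (q : F) (a : Bool) (u : List Bool) :
    qsh q (a :: u) [] = Finsupp.single (a :: u) 1 := by rw [qsh]

lemma qsh_cons (q : F) (a b : Bool) (u v : List Bool) :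
    qsh q (a :: u) (b :: v) = qcons F a (qsh q u (b :: v)) +
      (q ^ (qbr b a + qE b u)) • qcons F b (qsh q (a :: u) v) := by rw [qsh]

lemma qcons_single (a : Bool) (w : List Bool) (c : F) :
    qcons F a (Finsupp.single w c) = Finsupp.single (a :: w) c := by
  simp [qcons, Finsupp.lmapDomain_apply, Finsupp.mapDomain_single]

/-- R1 -/
lemma qsh_ba (q : F) (k m : ℕ) :
    qsh q (lb k) (la m) = qcons F bY (qsh q (lc k) (la m)) +
      (q ^ (-2 : ℤ)) • qcons F bX (qsh q (lb k) (ld m)) := by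
  conv_lhs => rw [lb_cons, la_cons, qsh_cons]
  rw [← la_cons, ← lb_cons, qE_lc]
  norm_num [qbr, bX, bY]

/-- R2 -/
lemma qsh_ca (q : F) (k m : ℕ) :
    qsh q (lc (k + 1)) (la m) = qcons F bX (qsh q (lb k) (la m)) +
      qcons F bX (qsh q (lc (k + 1)) (ld m)) := by
  conv_lhs => rw [lc_succ, la_cons, qsh_cons]
  rw [← la_cons, ← lc_succ, qE_lb_X]
  norm_num [qbr, bX, bY]

/-- R3 -/
lemma qsh_bd (q : F) (k m : ℕ) :
    qsh q (lb k) (ld (m + 1)) = qcons F bY (qsh q (lc k) (ld (m + 1))) +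
      (q ^ (2 : ℤ)) • qcons F bY (qsh q (lb k) (la m)) := by
  conv_lhs => rw [lb_cons, ld_succ, qsh_cons]
  rw [← ld_succ, ← lb_cons, qE_lc]
  norm_num [qbr, bX, bY]

/-- R4 -/
lemma qsh_cd (q : F) (k m : ℕ) :
    qsh q (lc (k + 1)) (ld (m + 1)) = qcons F bX (qsh q (lb k) (ld (m + 1))) +
      qcons F bY (qsh q (lc (k + 1)) (la m)) := by
  conv_lhs => rw [lc_succ, ld_succ, qsh_cons]
  rw [← ld_succ, ← lc_succ, qE_lb_Y]
  norm_num [qbr, bX, bY]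

end Stmt15Aux
namespace Stmt15Aux
set_option maxHeartbeats 1000000
set_option linter.dupNamespace false

open Finsupp Finset

variable {F : Type*} [Field F]

def SBA (q : F) (N : ℕ) : List Bool →₀ F :=
  ∑ k ∈ Finset.range (N + 1), ((-1 : F) ^ k) • qsh q (lb k) (la (N - k))
def SCA (q : F) (N : ℕ) : List Bool →₀ F :=
  ∑ k ∈ Finset.range (N + 1), ((-1 : F) ^ k) • qsh q (lc k) (la (N - k))
def SBD (q : F) (N : ℕ) : List Bool →₀ F :=
  ∑ k ∈ Finset.range (N + 1), ((-1 : F) ^ k) • qsh q (lb k) (ld (N - k))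
def SCD (q : F) (N : ℕ) : List Bool →₀ F :=
  ∑ k ∈ Finset.range (N + 1), ((-1 : F) ^ k) • qsh q (lc k) (ld (N - k))

lemma SBA_eq (q : F) (N : ℕ) :
    SBA q N = qcons F bY (SCA q N) + (q ^ (-2 : ℤ)) • qcons F bX (SBD q N) := by
  unfold SBA SCA SBD
  rw [map_sum, map_sum, Finset.smul_sum, ← Finset.sum_add_distrib]
  refine Finset.sum_congr rfl fun k _ => ?_
  rw [qsh_ba, smul_add, map_smul, map_smul, smul_comm ((-1 : F) ^ k)]

lemma SCA_succ (q : F) (N : ℕ) :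
    SCA q (N + 1) = qcons F bX (SCD q (N + 1)) - qcons F bX (SBA q N) := by
  have hSCD : SCD q (N + 1) =
      (∑ i ∈ Finset.range (N + 1), ((-1 : F) ^ (i + 1)) • qsh q (lc (i + 1)) (ld (N - i)))
        + Finsupp.single (ld (N + 1)) 1 := by
    unfold SCD
    rw [Finset.sum_range_succ']
    simp [Nat.succ_sub_succ, qsh_nil, lc_zero]
  have hmain : SCA q (N + 1) =
      (∑ i ∈ Finset.range (N + 1), ((-1 : F) ^ (i + 1)) • qsh q (lc (i + 1)) (la (N - i)))
        + Finsupp.single (la (N + 1)) 1 := by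
    unfold SCA
    rw [Finset.sum_range_succ']
    simp [Nat.succ_sub_succ, qsh_nil, lc_zero]
  have hsplit : ∀ i ∈ Finset.range (N + 1),
      ((-1 : F) ^ (i + 1)) • qsh q (lc (i + 1)) (la (N - i)) =
        ((-1 : F) ^ (i + 1)) • qcons F bX (qsh q (lb i) (la (N - i))) +
        ((-1 : F) ^ (i + 1)) • qcons F bX (qsh q (lc (i + 1)) (ld (N - i))) := by
    intro i _
    rw [qsh_ca, smul_add]
  have h1 : ∑ i ∈ Finset.range (N + 1),
      ((-1 : F) ^ (i + 1)) • qcons F bX (qsh q (lb i) (la (N - i)))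
      = - qcons F bX (SBA q N) := by
    unfold SBA
    rw [map_sum, ← Finset.sum_neg_distrib]
    refine Finset.sum_congr rfl fun i _ => ?_
    rw [map_smul, pow_succ, mul_comm, mul_smul]
    simp
  have h2 : ∑ i ∈ Finset.range (N + 1),
      ((-1 : F) ^ (i + 1)) • qcons F bX (qsh q (lc (i + 1)) (ld (N - i)))
      = qcons F bX (SCD q (N + 1)) - Finsupp.single (la (N + 1)) 1 := by
    conv_rhs => rw [hSCD]
    rw [map_add, map_sum, qcons_single, ← la_cons]
    have : ∀ i ∈ Finset.range (N + 1),
        ((-1 : F) ^ (i + 1)) • qcons F bX (qsh q (lc (i + 1)) (ld (N - i))) =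
          qcons F bX (((-1 : F) ^ (i + 1)) • qsh q (lc (i + 1)) (ld (N - i))) := by
      intro i _; rw [map_smul]
    rw [Finset.sum_congr rfl this]
    abel
  rw [hmain, Finset.sum_congr rfl hsplit, Finset.sum_add_distrib, h1, h2]
  abel

lemma SBD_succ (q : F) (N : ℕ) :
    SBD q (N + 1) = qcons F bY (SCD q (N + 1)) + (q ^ (2 : ℤ)) • qcons F bY (SBA q N) := by
  have hSCD : SCD q (N + 1) =
      (∑ k ∈ Finset.range (N + 1), ((-1 : F) ^ k) • qsh q (lc k) (ld (N + 1 - k)))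
        + ((-1 : F) ^ (N + 1)) • Finsupp.single (lc (N + 1)) 1 := by
    unfold SCD
    rw [Finset.sum_range_succ]
    rw [Nat.sub_self, ld_zero, lc_succ, qsh_nil', ← lc_succ]
  have hmain : SBD q (N + 1) =
      (∑ k ∈ Finset.range (N + 1), ((-1 : F) ^ k) • qsh q (lb k) (ld (N + 1 - k)))
        + ((-1 : F) ^ (N + 1)) • Finsupp.single (lb (N + 1)) 1 := by
    unfold SBD
    rw [Finset.sum_range_succ]
    rw [Nat.sub_self, ld_zero, lb_cons, qsh_nil', ← lb_cons]
  have hsplit : ∀ k ∈ Finset.range (N + 1),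
      ((-1 : F) ^ k) • qsh q (lb k) (ld (N + 1 - k)) =
        ((-1 : F) ^ k) • qcons F bY (qsh q (lc k) (ld (N + 1 - k))) +
        (q ^ (2 : ℤ)) • (((-1 : F) ^ k) • qcons F bY (qsh q (lb k) (la (N - k)))) := by
    intro k hk
    have hNk : N + 1 - k = (N - k) + 1 := by
      have := Finset.mem_range.mp hk; omega
    rw [hNk, qsh_bd, ← hNk, smul_add, smul_comm ((-1 : F) ^ k)]
  have h1 : ∑ k ∈ Finset.range (N + 1),
      ((-1 : F) ^ k) • qcons F bY (qsh q (lc k) (ld (N + 1 - k)))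
      = qcons F bY (SCD q (N + 1)) - ((-1 : F) ^ (N + 1)) • Finsupp.single (lb (N + 1)) 1 := by
    conv_rhs => rw [hSCD]
    rw [map_add, map_sum, map_smul, qcons_single, ← lb_cons]
    have : ∀ k ∈ Finset.range (N + 1),
        ((-1 : F) ^ k) • qcons F bY (qsh q (lc k) (ld (N + 1 - k))) =
          qcons F bY (((-1 : F) ^ k) • qsh q (lc k) (ld (N + 1 - k))) := by
      intro k _; rw [map_smul]
    rw [Finset.sum_congr rfl this]
    abel
  have h2 : ∑ k ∈ Finset.range (N + 1),
      (q ^ (2 : ℤ)) • (((-1 : F) ^ k) • qcons F bY (qsh q (lb k) (la (N - k))))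
      = (q ^ (2 : ℤ)) • qcons F bY (SBA q N) := by
    unfold SBA
    rw [map_sum, Finset.smul_sum]
    refine Finset.sum_congr rfl fun k _ => ?_
    rw [map_smul]
  rw [hmain, Finset.sum_congr rfl hsplit, Finset.sum_add_distrib, h1, h2]
  abel

lemma SCD_succ (q : F) (N : ℕ) :
    SCD q (N + 1) = qcons F bY (SCA q N) - qcons F bX (SBD q N) := by
  have hSCA : qcons F bY (SCA q N) =
      (∑ i ∈ Finset.range N, ((-1 : F) ^ (i + 1)) • qcons F bY (qsh q (lc (i + 1)) (la (N - (i + 1)))))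
        + Finsupp.single (ld (N + 1)) 1 := by
    unfold SCA
    rw [Finset.sum_range_succ', map_add, map_sum]
    simp only [pow_zero, one_smul, lc_zero, qsh_nil, qcons_single, map_smul]
    rw [Nat.sub_zero, ← ld_succ]
  have hSBD : qcons F bX (SBD q N) =
      (∑ i ∈ Finset.range N, ((-1 : F) ^ i) • qcons F bX (qsh q (lb i) (ld (N - i))))
        + ((-1 : F) ^ N) • Finsupp.single (lc (N + 1)) 1 := by
    unfold SBD
    rw [Finset.sum_range_succ, map_add, map_sum]
    simp only [Nat.sub_self, ld_zero, map_smul]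
    rw [lb_cons, qsh_nil', ← lb_cons, qcons_single, ← lc_succ]
  have hmain : SCD q (N + 1) =
      (∑ i ∈ Finset.range N, ((-1 : F) ^ (i + 1)) • qsh q (lc (i + 1)) (ld (N - i)))
        + ((-1 : F) ^ (N + 1)) • Finsupp.single (lc (N + 1)) 1
        + Finsupp.single (ld (N + 1)) 1 := by
    unfold SCD
    rw [Finset.sum_range_succ', Finset.sum_range_succ]
    simp only [Nat.succ_sub_succ, Nat.sub_self, Nat.sub_zero, pow_zero, one_smul]
    rw [ld_zero, lc_succ, qsh_nil', ← lc_succ, lc_zero, qsh_nil]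
  have hsplit : ∀ i ∈ Finset.range N,
      ((-1 : F) ^ (i + 1)) • qsh q (lc (i + 1)) (ld (N - i)) =
        -(((-1 : F) ^ i) • qcons F bX (qsh q (lb i) (ld (N - i)))) +
        ((-1 : F) ^ (i + 1)) • qcons F bY (qsh q (lc (i + 1)) (la (N - (i + 1)))) := by
    intro i hi
    have hNi : N - i = (N - (i + 1)) + 1 := by
      have := Finset.mem_range.mp hi; omega
    rw [hNi, qsh_cd, ← hNi, smul_add, pow_succ, mul_comm, mul_smul, neg_one_smul]
  rw [hmain, Finset.sum_congr rfl hsplit, Finset.sum_add_distrib, Finset.sum_neg_distrib]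
  rw [hSCA, hSBD]
  rw [pow_succ]
  rw [mul_comm ((-1 : F) ^ N) (-1), neg_one_mul, neg_smul]
  abel

end Stmt15Aux
namespace Stmt15Aux
set_option maxHeartbeats 1000000
set_option linter.dupNamespace false

open Finsupp Finset

variable {F : Type*} [Field F]

lemma zm2 (q : F) : q ^ (-2 : ℤ) = (q⁻¹) * (q⁻¹) := by
  rw [show (-2 : ℤ) = -((2 : ℕ) : ℤ) by norm_num, zpow_neg, zpow_natCast, sq, mul_inv]

lemma z2 (q : F) : q ^ (2 : ℤ) = q * q := by
  rw [show (2 : ℤ) = ((2 : ℕ) : ℤ) by norm_num, zpow_natCast, sq]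

lemma wA1 (n : ℕ) : bX :: bX :: (wpow wYYXX n ++ [bY, bY, bX]) = wpow wXXYY (n + 1) ++ [bX] := by
  induction n with
  | zero => rfl
  | succ n ih =>
      show bX :: bX :: ((wYYXX ++ wpow wYYXX n) ++ [bY, bY, bX]) = (wXXYY ++ wpow wXXYY (n + 1)) ++ [bX]
      simp only [wYYXX, wXXYY, List.cons_append, List.append_assoc, List.nil_append] at ih ⊢
      simp [ih]

lemma wA2 (n : ℕ) : bY :: bY :: (wpow wXXYY n ++ [bX, bX, bY]) = wpow wYYXX (n + 1) ++ [bY] := by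
  induction n with
  | zero => rfl
  | succ n ih =>
      show bY :: bY :: ((wXXYY ++ wpow wXXYY n) ++ [bX, bX, bY]) = (wYYXX ++ wpow wYYXX (n + 1)) ++ [bY]
      simp only [wYYXX, wXXYY, List.cons_append, List.append_assoc, List.nil_append] at ih ⊢
      simp [ih]

lemma wA3 (n : ℕ) : bX :: bX :: (wpow wYYXX (n + 1) ++ [bY]) = wpow wXXYY (n + 1) ++ [bX, bX, bY] := by
  induction n with
  | zero => rfl
  | succ n ih =>
      show bX :: bX :: ((wYYXX ++ wpow wYYXX (n + 1)) ++ [bY]) = (wXXYY ++ wpow wXXYY (n + 1)) ++ [bX, bX, bY]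
      simp only [wYYXX, wXXYY, List.cons_append, List.append_assoc, List.nil_append] at ih ⊢
      simp [ih]

lemma wA4 (n : ℕ) : bY :: bY :: (wpow wXXYY (n + 1) ++ [bX]) = wpow wYYXX (n + 1) ++ [bY, bY, bX] := by
  induction n with
  | zero => rfl
  | succ n ih =>
      show bY :: bY :: ((wXXYY ++ wpow wXXYY (n + 1)) ++ [bX]) = (wYYXX ++ wpow wYYXX (n + 1)) ++ [bY, bY, bX]
      simp only [wYYXX, wXXYY, List.cons_append, List.append_assoc, List.nil_append] at ih ⊢
      simp [ih]

lemma wA5 (n : ℕ) : bX :: (wpow wYYXX n ++ [bY, bY, bX]) = [bX, bY, bY] ++ wpow wXXYY n ++ [bX] := by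
  induction n with
  | zero => rfl
  | succ n ih =>
      show bX :: ((wYYXX ++ wpow wYYXX n) ++ [bY, bY, bX]) = [bX, bY, bY] ++ (wXXYY ++ wpow wXXYY n) ++ [bX]
      simp only [wYYXX, wXXYY, List.cons_append, List.append_assoc, List.nil_append] at ih ⊢
      simp [ih]

lemma wA6 (n : ℕ) : bY :: (wpow wXXYY n ++ [bX, bX, bY]) = [bY, bX, bX] ++ wpow wYYXX n ++ [bY] := by
  induction n with
  | zero => rfl
  | succ n ih =>
      show bY :: ((wXXYY ++ wpow wXXYY n) ++ [bX, bX, bY]) = [bY, bX, bX] ++ (wYYXX ++ wpow wYYXX n) ++ [bY]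
      simp only [wYYXX, wXXYY, List.cons_append, List.append_assoc, List.nil_append] at ih ⊢
      simp [ih]

lemma keyQ (q : F) (hq : q ≠ 0) (n : ℕ) :
    SCA q (2 * n) = ((-1 : F) ^ n * (q + q⁻¹) ^ (2 * n)) •
        Finsupp.single (wpow wXXYY n ++ [bX]) 1
    ∧ SBD q (2 * n) = ((-1 : F) ^ n * (q + q⁻¹) ^ (2 * n)) •
        Finsupp.single (wpow wYYXX n ++ [bY]) 1
    ∧ SCA q (2 * n + 1) = ((-1 : F) ^ (n + 1) * q⁻¹ * (q + q⁻¹) ^ (2 * n + 1)) •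
        Finsupp.single (wpow wXXYY n ++ [bX, bX, bY]) 1
    ∧ SBD q (2 * n + 1) = ((-1 : F) ^ n * q * (q + q⁻¹) ^ (2 * n + 1)) •
        Finsupp.single (wpow wYYXX n ++ [bY, bY, bX]) 1 := by
  induction n with
  | zero =>
      have c0 : SCA q 0 = Finsupp.single [bX] 1 := by
        simp [SCA, Finset.sum_range_one, lc_zero, qsh_nil, la, wpow]
      have d0 : SBD q 0 = Finsupp.single [bY] 1 := by
        simp [SBD, Finset.sum_range_one, lb, ld, wpow, qsh_nil']
      have ba0 : SBA q 0 = Finsupp.single [bY, bX] 1 +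
          ((q⁻¹) * (q⁻¹)) • Finsupp.single [bX, bY] 1 := by
        rw [SBA_eq, c0, d0, qcons_single, qcons_single, zm2]
      have cd1 : SCD q 1 = Finsupp.single [bY, bX] 1 - Finsupp.single [bX, bY] 1 := by
        have h := SCD_succ q 0
        norm_num at h
        rw [h, c0, d0, qcons_single, qcons_single]
      have c1 : SCA q 1 = ((-1 : F) * q⁻¹ * (q + q⁻¹)) • Finsupp.single [bX, bX, bY] 1 := by
        have h := SCA_succ q 0
        norm_num at h
        rw [h, cd1, ba0]
        simp only [map_sub, map_add, map_smul, qcons_single]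
        match_scalars <;> field_simp <;> ring
      have d1 : SBD q 1 = (q * (q + q⁻¹)) • Finsupp.single [bY, bY, bX] 1 := by
        have h := SBD_succ q 0
        norm_num at h
        rw [h, cd1, ba0]
        simp only [map_sub, map_add, map_smul, qcons_single, z2]
        match_scalars <;> field_simp <;> ring
      refine ⟨?_, ?_, ?_, ?_⟩ <;> norm_num [c0, d0, c1, d1, wpow]
  | succ n ih =>
      obtain ⟨ih1, ih2, ih3, ih4⟩ := ih
      have hSBA1 : SBA q (2 * n + 1) =
          ((-1 : F) ^ n * q⁻¹ * (q + q⁻¹) ^ (2 * n + 1)) •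
            Finsupp.single (bX :: (wpow wYYXX n ++ [bY, bY, bX])) 1
          - ((-1 : F) ^ n * q⁻¹ * (q + q⁻¹) ^ (2 * n + 1)) •
            Finsupp.single (bY :: (wpow wXXYY n ++ [bX, bX, bY])) 1 := by
        rw [SBA_eq, ih3, ih4]
        simp only [map_smul, qcons_single, zm2]
        match_scalars <;> field_simp <;> ring
      have hSCD2 : SCD q (2 * n + 1 + 1) =
          ((-1 : F) ^ (n + 1) * q⁻¹ * (q + q⁻¹) ^ (2 * n + 1)) •
            Finsupp.single (bY :: (wpow wXXYY n ++ [bX, bX, bY])) 1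
          - ((-1 : F) ^ n * q * (q + q⁻¹) ^ (2 * n + 1)) •
            Finsupp.single (bX :: (wpow wYYXX n ++ [bY, bY, bX])) 1 := by
        rw [SCD_succ, ih3, ih4, map_smul, map_smul, qcons_single, qcons_single]
      have hSCA2 : SCA q (2 * n + 1 + 1) =
          ((-1 : F) ^ (n + 1) * (q + q⁻¹) ^ (2 * n + 1 + 1)) •
            Finsupp.single (wpow wXXYY (n + 1) ++ [bX]) 1 := by
        rw [SCA_succ, hSCD2, hSBA1]
        simp only [map_sub, map_add, map_smul, qcons_single]
        rw [wA1]
        match_scalars <;> field_simp <;> ring_nf <;> field_simp <;> ring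
      have hSBD2 : SBD q (2 * n + 1 + 1) =
          ((-1 : F) ^ (n + 1) * (q + q⁻¹) ^ (2 * n + 1 + 1)) •
            Finsupp.single (wpow wYYXX (n + 1) ++ [bY]) 1 := by
        rw [SBD_succ, hSCD2, hSBA1]
        simp only [map_sub, map_add, map_smul, qcons_single, z2]
        rw [wA2]
        match_scalars <;> field_simp <;> ring_nf <;> field_simp <;> ring
      have hSBA2 : SBA q (2 * n + 1 + 1) =
          ((-1 : F) ^ (n + 1) * (q + q⁻¹) ^ (2 * n + 1 + 1)) •
            Finsupp.single (bY :: (wpow wXXYY (n + 1) ++ [bX])) 1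
          + ((-1 : F) ^ (n + 1) * q⁻¹ * q⁻¹ * (q + q⁻¹) ^ (2 * n + 1 + 1)) •
            Finsupp.single (bX :: (wpow wYYXX (n + 1) ++ [bY])) 1 := by
        rw [SBA_eq, hSCA2, hSBD2]
        simp only [map_smul, qcons_single, zm2]
        match_scalars <;> field_simp <;> ring
      have hSCD3 : SCD q (2 * n + 1 + 1 + 1) =
          ((-1 : F) ^ (n + 1) * (q + q⁻¹) ^ (2 * n + 1 + 1)) •
            Finsupp.single (bY :: (wpow wXXYY (n + 1) ++ [bX])) 1
          - ((-1 : F) ^ (n + 1) * (q + q⁻¹) ^ (2 * n + 1 + 1)) •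
            Finsupp.single (bX :: (wpow wYYXX (n + 1) ++ [bY])) 1 := by
        rw [SCD_succ, hSCA2, hSBD2, map_smul, map_smul, qcons_single, qcons_single]
      have hSCA3 : SCA q (2 * n + 1 + 1 + 1) =
          ((-1 : F) ^ (n + 1 + 1) * q⁻¹ * (q + q⁻¹) ^ (2 * n + 1 + 1 + 1)) •
            Finsupp.single (wpow wXXYY (n + 1) ++ [bX, bX, bY]) 1 := by
        rw [SCA_succ, hSCD3, hSBA2]
        simp only [map_sub, map_add, map_smul, qcons_single]
        rw [wA3]
        match_scalars <;> field_simp <;> ring_nf <;> field_simp <;> ring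
      have hSBD3 : SBD q (2 * n + 1 + 1 + 1) =
          ((-1 : F) ^ (n + 1) * q * (q + q⁻¹) ^ (2 * n + 1 + 1 + 1)) •
            Finsupp.single (wpow wYYXX (n + 1) ++ [bY, bY, bX]) 1 := by
        rw [SBD_succ, hSCD3, hSBA2]
        simp only [map_sub, map_add, map_smul, qcons_single, z2]
        rw [wA4]
        match_scalars <;> field_simp <;> ring_nf <;> field_simp <;> ring
      have e1 : 2 * (n + 1) = 2 * n + 1 + 1 := by ring
      rw [e1]
      exact ⟨hSCA2, hSBD2, hSCA3, hSBD3⟩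

end Stmt15Aux
set_option maxHeartbeats 1000000 in
/-- `Σ_{k=0}^{2n+1} (−1)^k W_{k+1} ⋆ W_{k−2n−1}
      = (−1)^n q^{-1} [2]_q^{2n+1} (xyy(xxyy)^n x − yxx(yyxx)^n y)`,
where `W_{k+1} = (yx)^k y` and `W_{k−2n−1} = (xy)^{2n+1−k} x` for `0 ≤ k ≤ 2n+1`. -/
theorem stmt15 {F : Type*} [Field F] [CharZero F] (q : F) (hq : q ≠ 0)
    (hq1 : ∀ m : ℕ, 0 < m → q ^ m ≠ 1) (n : ℕ) :
    ∑ k ∈ Finset.range (2 * n + 2),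
        ((-1 : F) ^ k) • qsh q (wpow wYX k ++ [bY]) (wpow wXY (2 * n + 1 - k) ++ [bX])
      = ((-1 : F) ^ n * q⁻¹ * (q + q⁻¹) ^ (2 * n + 1)) •
          (Finsupp.single ([bX, bY, bY] ++ wpow wXXYY n ++ [bX]) (1 : F)
            - Finsupp.single ([bY, bX, bX] ++ wpow wYYXX n ++ [bY]) (1 : F)) := by

  classical
  obtain ⟨-, -, h3, h4⟩ := Stmt15Aux.keyQ q hq n
  have hL : ∑ k ∈ Finset.range (2 * n + 2),
      ((-1 : F) ^ k) • qsh q (wpow wYX k ++ [bY]) (wpow wXY (2 * n + 1 - k) ++ [bX])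
      = Stmt15Aux.SBA q (2 * n + 1) := rfl
  rw [hL, Stmt15Aux.SBA_eq, h3, h4]
  simp only [map_smul, Stmt15Aux.qcons_single, Stmt15Aux.zm2]
  rw [Stmt15Aux.wA5, Stmt15Aux.wA6]
  match_scalars <;> field_simp <;> ring
end
end

section
/- A word w in the letters x, y that contains no occurrence of any of the segments xxx, yyy, xyx, yxy (as contiguous subwords) and has length at least 2 is doubly alternating, i.e., w belongs to one of the 16 families (xxyy)^{n+1}, (yyxx)^{n+1}, (xxyy)^n xx, (yyxx)^n yy, xyy(xxyy)^n, yxx(yyxx)^n, x(yyxx)^n, y(xxyy)^n, (xxyy)^n xxy, (yyxx)^n yyx, (xxyy)^n x, (yyxx)^n y, x(yyxx)^n y, y(xxyy)^n x, xyy(xxyy)^n x, yxx(yyxx)^n y for some n ∈ ℕ (with the constraint that its length is at least 2, so degenerate length-≤1 members are excluded as needed). -/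
noncomputable section

def Fam (w : List Bool) : Prop :=
    ∃ n : ℕ,
      w = wpow wXXYY (n + 1) ∨
      w = wpow wYYXX (n + 1) ∨
      w = wpow wXXYY n ++ [bX, bX] ∨
      w = wpow wYYXX n ++ [bY, bY] ∨
      w = [bX, bY, bY] ++ wpow wXXYY n ∨
      w = [bY, bX, bX] ++ wpow wYYXX n ∨
      w = [bX] ++ wpow wYYXX n ∨
      w = [bY] ++ wpow wXXYY n ∨
      w = wpow wXXYY n ++ [bX, bX, bY] ∨
      w = wpow wYYXX n ++ [bY, bY, bX] ∨
      w = wpow wXXYY n ++ [bX] ∨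
      w = wpow wYYXX n ++ [bY] ∨
      w = [bX] ++ wpow wYYXX n ++ [bY] ∨
      w = [bY] ++ wpow wXXYY n ++ [bX] ∨
      w = [bX, bY, bY] ++ wpow wXXYY n ++ [bX] ∨
      w = [bY, bX, bX] ++ wpow wYYXX n ++ [bY]

lemma fam1 {w} (n) (h : w = wpow wXXYY (n + 1)) : Fam w := ⟨n, Or.inl h⟩
lemma fam2 {w} (n) (h : w = wpow wYYXX (n + 1)) : Fam w := ⟨n, Or.inr (Or.inl h)⟩
lemma fam3 {w} (n) (h : w = wpow wXXYY n ++ [bX, bX]) : Fam w :=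
  ⟨n, Or.inr (Or.inr (Or.inl h))⟩
lemma fam4 {w} (n) (h : w = wpow wYYXX n ++ [bY, bY]) : Fam w :=
  ⟨n, Or.inr (Or.inr (Or.inr (Or.inl h)))⟩
lemma fam5 {w} (n) (h : w = [bX, bY, bY] ++ wpow wXXYY n) : Fam w :=
  ⟨n, Or.inr (Or.inr (Or.inr (Or.inr (Or.inl h))))⟩
lemma fam6 {w} (n) (h : w = [bY, bX, bX] ++ wpow wYYXX n) : Fam w :=
  ⟨n, Or.inr (Or.inr (Or.inr (Or.inr (Or.inr (Or.inl h)))))⟩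
lemma fam7 {w} (n) (h : w = [bX] ++ wpow wYYXX n) : Fam w :=
  ⟨n, Or.inr (Or.inr (Or.inr (Or.inr (Or.inr (Or.inr (Or.inl h))))))⟩
lemma fam8 {w} (n) (h : w = [bY] ++ wpow wXXYY n) : Fam w :=
  ⟨n, Or.inr (Or.inr (Or.inr (Or.inr (Or.inr (Or.inr (Or.inr (Or.inl h)))))))⟩
lemma fam9 {w} (n) (h : w = wpow wXXYY n ++ [bX, bX, bY]) : Fam w :=
  ⟨n, Or.inr (Or.inr (Or.inr (Or.inr (Or.inr (Or.inr (Or.inr (Or.inr (Or.inl h))))))))⟩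
lemma fam10 {w} (n) (h : w = wpow wYYXX n ++ [bY, bY, bX]) : Fam w :=
  ⟨n, Or.inr (Or.inr (Or.inr (Or.inr (Or.inr (Or.inr (Or.inr (Or.inr (Or.inr (Or.inl h)))))))))⟩
lemma fam11 {w} (n) (h : w = wpow wXXYY n ++ [bX]) : Fam w :=
  ⟨n, Or.inr (Or.inr (Or.inr (Or.inr (Or.inr (Or.inr (Or.inr (Or.inr (Or.inr (Or.inr
    (Or.inl h))))))))))⟩
lemma fam12 {w} (n) (h : w = wpow wYYXX n ++ [bY]) : Fam w :=
  ⟨n, Or.inr (Or.inr (Or.inr (Or.inr (Or.inr (Or.inr (Or.inr (Or.inr (Or.inr (Or.inr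
    (Or.inr (Or.inl h)))))))))))⟩
lemma fam13 {w} (n) (h : w = [bX] ++ wpow wYYXX n ++ [bY]) : Fam w :=
  ⟨n, Or.inr (Or.inr (Or.inr (Or.inr (Or.inr (Or.inr (Or.inr (Or.inr (Or.inr (Or.inr
    (Or.inr (Or.inr (Or.inl h))))))))))))⟩
lemma fam14 {w} (n) (h : w = [bY] ++ wpow wXXYY n ++ [bX]) : Fam w :=
  ⟨n, Or.inr (Or.inr (Or.inr (Or.inr (Or.inr (Or.inr (Or.inr (Or.inr (Or.inr (Or.inr
    (Or.inr (Or.inr (Or.inr (Or.inl h)))))))))))))⟩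
lemma fam15 {w} (n) (h : w = [bX, bY, bY] ++ wpow wXXYY n ++ [bX]) : Fam w :=
  ⟨n, Or.inr (Or.inr (Or.inr (Or.inr (Or.inr (Or.inr (Or.inr (Or.inr (Or.inr (Or.inr
    (Or.inr (Or.inr (Or.inr (Or.inr (Or.inl h))))))))))))))⟩
lemma fam16 {w} (n) (h : w = [bY, bX, bX] ++ wpow wYYXX n ++ [bY]) : Fam w :=
  ⟨n, Or.inr (Or.inr (Or.inr (Or.inr (Or.inr (Or.inr (Or.inr (Or.inr (Or.inr (Or.inr
    (Or.inr (Or.inr (Or.inr (Or.inr (Or.inr h))))))))))))))⟩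

lemma comm2 : ∀ n, wpow wXXYY n ++ [bX, bX] = [bX, bX] ++ wpow wYYXX n := by
  intro n
  induction n with
  | zero => rfl
  | succ n ih =>
    show wXXYY ++ wpow wXXYY n ++ [bX, bX] = [bX, bX] ++ (wYYXX ++ wpow wYYXX n)
    rw [List.append_assoc, ih]
    simp [wXXYY, wYYXX, bX, bY]

lemma comm1 : ∀ n, wpow wYYXX n ++ [bY, bY] = [bY, bY] ++ wpow wXXYY n := by
  intro n
  induction n with
  | zero => rfl
  | succ n ih =>
    show wYYXX ++ wpow wYYXX n ++ [bY, bY] = [bY, bY] ++ (wXXYY ++ wpow wXXYY n)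
    rw [List.append_assoc, ih]
    simp [wXXYY, wYYXX, bX, bY]

lemma comm2' (n : ℕ) :
    wpow wXXYY n ++ [bX, bX, bY] = [bX, bX] ++ (wpow wYYXX n ++ [bY]) := by
  have h := comm2 n
  rw [show [bX, bX, bY] = [bX, bX] ++ [bY] from rfl, ← List.append_assoc, h]
  simp

lemma comm1' (n : ℕ) :
    wpow wYYXX n ++ [bY, bY, bX] = [bY, bY] ++ (wpow wXXYY n ++ [bX]) := by
  have h := comm1 n
  rw [show [bY, bY, bX] = [bY, bY] ++ [bX] from rfl, ← List.append_assoc, h]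
  simp

theorem auxN : ∀ (N : ℕ) (w : List Bool), w.length ≤ N → 2 ≤ w.length →
    ¬ [bX, bX, bX] <:+: w → ¬ [bY, bY, bY] <:+: w →
    ¬ [bX, bY, bX] <:+: w → ¬ [bY, bX, bY] <:+: w → Fam w := by
  intro N
  induction N with
  | zero => intro w hN hlen _ _ _ _; omega
  | succ N ih =>
  intro w hN hlen h1 h2 h3 h4
  rcases w with _ | ⟨a, _ | ⟨b, t⟩⟩
  · simp at hlen
  · simp at hlen
  rcases t with _ | ⟨c, t⟩
  · -- length two base case
    cases a <;> cases b
    · exact fam3 0 rfl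
    · exact fam13 0 rfl
    · exact fam14 0 rfl
    · exact fam4 0 rfl
  · have hsuf : (b :: c :: t) <:+: (a :: b :: c :: t) :=
      (List.suffix_cons a (b :: c :: t)).isInfix
    obtain ⟨n, h | h | h | h | h | h | h | h | h | h | h | h | h | h | h | h⟩ :=
      ih (b :: c :: t) (by simp at hN ⊢; omega) (by simp)
        (fun hh => h1 (hh.trans hsuf)) (fun hh => h2 (hh.trans hsuf))
        (fun hh => h3 (hh.trans hsuf)) (fun hh => h4 (hh.trans hsuf))
    all_goals cases a
    -- family 1
    · exact absurd (List.IsPrefix.isInfix (by rw [h]; simp [wpow, wXXYY, bX, bY])) h1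
    · exact fam8 (n + 1) (by rw [h]; simp [bY])
    -- family 2
    · exact fam7 (n + 1) (by rw [h]; simp [bX])
    · exact absurd (List.IsPrefix.isInfix (by rw [h]; simp [wpow, wYYXX, bX, bY])) h2
    -- family 3
    · exact absurd (List.IsPrefix.isInfix (by rw [h, comm2]; simp [bX])) h1
    · exact fam6 n (by rw [h, comm2]; simp [bX, bY])
    -- family 4
    · exact fam5 n (by rw [h, comm1]; simp [bX, bY])
    · exact absurd (List.IsPrefix.isInfix (by rw [h, comm1]; simp [bY])) h2
    -- family 5
    · exact fam1 n (by rw [h]; simp [wpow, wXXYY, bX, bY])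
    · exact absurd (List.IsPrefix.isInfix (by rw [h]; simp [bX, bY])) h4
    -- family 6
    · exact absurd (List.IsPrefix.isInfix (by rw [h]; simp [bX, bY])) h3
    · exact fam2 n (by rw [h]; simp [wpow, wYYXX, bX, bY])
    -- family 7
    · exact fam3 n (by rw [h, comm2]; simp [bX])
    · rcases n with _ | n
      · simp [wpow, bX] at h
      · exact absurd (List.IsPrefix.isInfix
          (by rw [h]; simp [wpow, wYYXX, bX, bY])) h4
    -- family 8
    · rcases n with _ | n
      · simp [wpow, bY] at h
      · exact absurd (List.IsPrefix.isInfix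
          (by rw [h]; simp [wpow, wXXYY, bX, bY])) h3
    · exact fam4 n (by rw [h, comm1]; simp [bY])
    -- family 9
    · exact absurd (List.IsPrefix.isInfix (by rw [h, comm2']; simp [bX, bY])) h1
    · exact fam16 n (by rw [h, comm2']; simp [bX, bY])
    -- family 10
    · exact fam15 n (by rw [h, comm1']; simp [bX, bY])
    · exact absurd (List.IsPrefix.isInfix (by rw [h, comm1']; simp [bY])) h2
    -- family 11
    · rcases n with _ | n
      · simp [wpow, bX] at h
      · exact absurd (List.IsPrefix.isInfix
          (by rw [h]; simp [wpow, wXXYY, bX, bY])) h1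
    · exact fam14 n (by rw [h]; simp [bY])
    -- family 12
    · exact fam13 n (by rw [h]; simp [bX])
    · rcases n with _ | n
      · simp [wpow, bY] at h
      · exact absurd (List.IsPrefix.isInfix
          (by rw [h]; simp [wpow, wYYXX, bX, bY])) h2
    -- family 13
    · exact fam9 n (by rw [h, comm2']; simp [bX, bY])
    · rcases n with _ | n <;>
        exact absurd (List.IsPrefix.isInfix
          (by rw [h]; simp [wpow, wYYXX, bX, bY])) h4
    -- family 14
    · rcases n with _ | n <;>
        exact absurd (List.IsPrefix.isInfix
          (by rw [h]; simp [wpow, wXXYY, bX, bY])) h3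
    · exact fam10 n (by rw [h, comm1']; simp [bX, bY])
    -- family 15
    · exact fam11 (n + 1) (by rw [h]; simp [wpow, wXXYY, bX, bY])
    · exact absurd (List.IsPrefix.isInfix (by rw [h]; simp [bX, bY])) h4
    -- family 16
    · exact absurd (List.IsPrefix.isInfix (by rw [h]; simp [bX, bY])) h3
    · exact fam12 (n + 1) (by rw [h]; simp [wpow, wYYXX, bX, bY])

theorem aux (w : List Bool) (hlen : 2 ≤ w.length)
    (h1 : ¬ [bX, bX, bX] <:+: w) (h2 : ¬ [bY, bY, bY] <:+: w)
    (h3 : ¬ [bX, bY, bX] <:+: w) (h4 : ¬ [bY, bX, bY] <:+: w) : Fam w :=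
  auxN w.length w le_rfl hlen h1 h2 h3 h4

/-- A word of length at least 2 avoiding the segments `xxx`, `yyy`, `xyx`, `yxy`
is doubly alternating, i.e. lies in one of the 16 families. -/
theorem stmt18 (w : List Bool) (hlen : 2 ≤ w.length)
    (h1 : ¬ [bX, bX, bX] <:+: w) (h2 : ¬ [bY, bY, bY] <:+: w)
    (h3 : ¬ [bX, bY, bX] <:+: w) (h4 : ¬ [bY, bX, bY] <:+: w) :
    ∃ n : ℕ,
      w = wpow wXXYY (n + 1) ∨
      w = wpow wYYXX (n + 1) ∨
      w = wpow wXXYY n ++ [bX, bX] ∨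
      w = wpow wYYXX n ++ [bY, bY] ∨
      w = [bX, bY, bY] ++ wpow wXXYY n ∨
      w = [bY, bX, bX] ++ wpow wYYXX n ∨
      w = [bX] ++ wpow wYYXX n ∨
      w = [bY] ++ wpow wXXYY n ∨
      w = wpow wXXYY n ++ [bX, bX, bY] ∨
      w = wpow wYYXX n ++ [bY, bY, bX] ∨
      w = wpow wXXYY n ++ [bX] ∨
      w = wpow wYYXX n ++ [bY] ∨
      w = [bX] ++ wpow wYYXX n ++ [bY] ∨
      w = [bY] ++ wpow wXXYY n ++ [bX] ∨
      w = [bX, bY, bY] ++ wpow wXXYY n ++ [bX] ∨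
      w = [bY, bX, bX] ++ wpow wYYXX n ++ [bY] := by
  exact aux w hlen h1 h2 h3 h4
end
end
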